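/- arXiv:1212.6342 — 10 statements merged into one kernel-verified Lean document; each statement's English description precedes it below -/
import Mathlib

section
/- Let γ > 1 be fixed and M > 0. Then there exist constants c, C > 0 such that for all 0 ≤ T ≤ S < ∞ and 0 < w ≤ M, the integral J_γ(T,S,w) = ∫_T^S t^γ/(t²+w²) dt satisfies c·((S−T)/S)·S^{γ+1}/(max(S,w))² ≤ J_γ(T,S,w) ≤ C·((S−T)/S)·S^{γ+1}/(max(S,w))². -/
/-!
Put m = max S w. On [T, S] we have t² + w² ≤ 2m², so the integral is at least
∫_T^S t^γ / (2m²) ≥ (S - T) S^γ / (2(γ + 1) m²). For the upper bound, if S ≤ w the integrand is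
at most S^γ / w²; if w ≤ S it is at most t^(γ-2), whose integral over [T, S] is at most
max 1 (γ - 1)⁻¹ · (S - T) S^(γ-2): for γ ≥ 2 bound t^(γ-2) by S^(γ-2), for 1 < γ < 2 use
concavity of t ↦ t^(γ-1).
-/

open Real

section

variable {γ w T S : ℝ}

lemma mul_rpow_sub_one_le_rpow_sub_rpow (hγ : 1 ≤ γ) (hT : 0 ≤ T) (hTS : T ≤ S) :
    (S - T) * S ^ (γ - 1) ≤ S ^ γ - T ^ γ := by
  have hγ0 : γ - 1 + 1 ≠ 0 := by linarith
  have hS : S ^ γ = S ^ (γ - 1) * S := by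
    simpa using rpow_add' (hT.trans hTS) hγ0
  have hT' : T ^ γ = T ^ (γ - 1) * T := by
    simpa using rpow_add' hT hγ0
  have : T ^ (γ - 1) ≤ S ^ (γ - 1) := rpow_le_rpow hT hTS (by linarith)
  nlinarith

lemma rpow_sub_rpow_le_mul_rpow_sub_one (hγ : γ ≤ 1) (hT : 0 ≤ T) (hTS : T ≤ S) (hS : 0 < S) :
    S ^ γ - T ^ γ ≤ (S - T) * S ^ (γ - 1) := by
  have hS' : S ^ γ = S ^ (γ - 1) * S := by
    rw [← rpow_add_one hS.ne']; ring_nf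
  have hT' : T * S ^ (γ - 1) ≤ T ^ γ := by
    rcases hT.eq_or_lt with rfl | hT
    · simpa using rpow_nonneg le_rfl γ
    calc T * S ^ (γ - 1) ≤ T * T ^ (γ - 1) :=
          mul_le_mul_of_nonneg_left (rpow_le_rpow_of_nonpos hT hTS (by linarith)) hT.le
      _ = T ^ γ := by rw [mul_comm, ← rpow_add_one hT.ne']; ring_nf
  nlinarith

lemma inv_mul_le_integral_rpow (hγ : 0 ≤ γ) (hT : 0 ≤ T) (hTS : T ≤ S) :
    (γ + 1)⁻¹ * ((S - T) * S ^ γ) ≤ ∫ t in T..S, t ^ γ := by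
  have key := mul_rpow_sub_one_le_rpow_sub_rpow (γ := γ + 1) (by linarith) hT hTS
  rw [add_sub_cancel_right] at key
  rw [integral_rpow (Or.inl (by linarith)), inv_mul_eq_div]
  gcongr

lemma integral_rpow_le_max_mul (hγ : -1 < γ) (hT : 0 ≤ T) (hTS : T ≤ S) :
    ∫ t in T..S, t ^ γ ≤ max 1 (γ + 1)⁻¹ * ((S - T) * S ^ γ) := by
  have hS : 0 ≤ S := hT.trans hTS
  rcases le_or_gt 0 γ with hγ0 | hγ0
  · calc ∫ t in T..S, t ^ γ ≤ ∫ _ in T..S, S ^ γ :=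
          intervalIntegral.integral_mono_on hTS (intervalIntegral.intervalIntegrable_rpow' hγ)
            intervalIntegrable_const fun t ht ↦ rpow_le_rpow (hT.trans ht.1) ht.2 hγ0
      _ = 1 * ((S - T) * S ^ γ) := by simp
      _ ≤ _ := by gcongr; exact le_max_left _ _
  rcases hS.eq_or_lt with hS0 | hS
  · obtain rfl : T = S := le_antisymm hTS (hS0 ▸ hT)
    simp
  have key := rpow_sub_rpow_le_mul_rpow_sub_one (γ := γ + 1) (by linarith) hT hTS hS
  rw [add_sub_cancel_right] at key
  rw [integral_rpow (Or.inl hγ), div_eq_inv_mul]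
  calc (γ + 1)⁻¹ * (S ^ (γ + 1) - T ^ (γ + 1)) ≤ (γ + 1)⁻¹ * ((S - T) * S ^ γ) :=
        mul_le_mul_of_nonneg_left key (inv_nonneg.2 (by linarith))
    _ ≤ _ := by gcongr; exact le_max_right _ _

lemma continuous_rpow_div_sq_add_sq (hγ : 0 ≤ γ) (hw : w ≠ 0) :
    Continuous fun t : ℝ ↦ t ^ γ / (t ^ 2 + w ^ 2) :=
  (continuous_id.rpow_const fun _ ↦ Or.inr hγ).div (by fun_prop) fun _ ↦ by positivity

lemma rpow_div_sq_add_sq_le_rpow_sub_two (hγ : 0 < γ) {t : ℝ} (ht : 0 ≤ t) :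
    t ^ γ / (t ^ 2 + w ^ 2) ≤ t ^ (γ - 2) := by
  rcases ht.eq_or_lt with rfl | ht
  · simpa [zero_rpow hγ.ne'] using rpow_nonneg le_rfl _
  rw [show γ - 2 = γ - (2 : ℕ) by norm_num, rpow_sub_natCast ht.ne']
  gcongr
  nlinarith

lemma le_integral_rpow_div_sq_add_sq (hγ : 0 ≤ γ) (hw : 0 < w) (hT : 0 ≤ T) (hTS : T ≤ S) :
    (2 * (γ + 1))⁻¹ * ((S - T) * S ^ γ / max S w ^ 2) ≤ ∫ t in T..S, t ^ γ / (t ^ 2 + w ^ 2) := by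
  set m := max S w
  have hpt : ∀ t ∈ Set.Icc T S, t ^ γ / (2 * m ^ 2) ≤ t ^ γ / (t ^ 2 + w ^ 2) := by
    intro t ⟨hTt, htS⟩
    have htm : t ≤ m := htS.trans (le_max_left S w)
    have hwm : w ≤ m := le_max_right S w
    gcongr
    · exact rpow_nonneg (hT.trans hTt) γ
    · nlinarith
  calc (2 * (γ + 1))⁻¹ * ((S - T) * S ^ γ / m ^ 2)
      = (γ + 1)⁻¹ * ((S - T) * S ^ γ) / (2 * m ^ 2) := by rw [mul_inv]; ring
    _ ≤ (∫ t in T..S, t ^ γ) / (2 * m ^ 2) := by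
        gcongr; exact inv_mul_le_integral_rpow hγ hT hTS
    _ = ∫ t in T..S, t ^ γ / (2 * m ^ 2) := (intervalIntegral.integral_div _ _).symm
    _ ≤ ∫ t in T..S, t ^ γ / (t ^ 2 + w ^ 2) :=
        intervalIntegral.integral_mono_on hTS
          ((intervalIntegral.intervalIntegrable_rpow' (by linarith)).div_const _)
          ((continuous_rpow_div_sq_add_sq hγ hw.ne').intervalIntegrable T S) hpt

lemma integral_rpow_div_sq_add_sq_le (hγ : 1 < γ) (hw : 0 < w) (hT : 0 ≤ T) (hTS : T ≤ S) :
    ∫ t in T..S, t ^ γ / (t ^ 2 + w ^ 2) ≤ max 1 (γ - 1)⁻¹ * ((S - T) * S ^ γ / max S w ^ 2) := by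
  have hS : 0 ≤ S := hT.trans hTS
  have hf : IntervalIntegrable (fun t ↦ t ^ γ / (t ^ 2 + w ^ 2)) MeasureTheory.volume T S :=
    (continuous_rpow_div_sq_add_sq (by linarith) hw.ne').intervalIntegrable T S
  rcases le_total S w with hSw | hwS
  · rw [max_eq_right hSw]
    calc ∫ t in T..S, t ^ γ / (t ^ 2 + w ^ 2) ≤ ∫ _ in T..S, S ^ γ / w ^ 2 := by
          refine intervalIntegral.integral_mono_on hTS hf intervalIntegrable_const ?_
          intro t ⟨hTt, htS⟩
          gcongr
          · exact hT.trans hTt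
          · nlinarith
      _ = 1 * ((S - T) * S ^ γ / w ^ 2) := by
          rw [intervalIntegral.integral_const, smul_eq_mul]; ring
      _ ≤ _ := by
          gcongr
          exact le_max_left _ _
  · have hS : 0 < S := hw.trans_le hwS
    rw [max_eq_left hwS]
    calc ∫ t in T..S, t ^ γ / (t ^ 2 + w ^ 2) ≤ ∫ t in T..S, t ^ (γ - 2) :=
          intervalIntegral.integral_mono_on hTS hf
            (intervalIntegral.intervalIntegrable_rpow' (by linarith))
            fun t ht ↦ rpow_div_sq_add_sq_le_rpow_sub_two (by linarith) (hT.trans ht.1)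
      _ ≤ max 1 (γ - 2 + 1)⁻¹ * ((S - T) * S ^ (γ - 2)) :=
          integral_rpow_le_max_mul (by linarith) hT hTS
      _ = max 1 (γ - 1)⁻¹ * ((S - T) * S ^ γ / S ^ 2) := by
          rw [show γ - 2 = γ - (2 : ℕ) by norm_num, rpow_sub_natCast hS.ne']
          ring_nf

end

theorem stmt3_general (γ M : ℝ) (hγ : 1 < γ) :
    ∃ c C : ℝ, 0 < c ∧ 0 < C ∧ ∀ T S w : ℝ, 0 ≤ T → T ≤ S → 0 < w → w ≤ M →
      c * ((S - T) / S * (S ^ (γ + 1) / (max S w) ^ 2)) ≤ (∫ t in T..S, t ^ γ / (t ^ 2 + w ^ 2)) ∧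
      (∫ t in T..S, t ^ γ / (t ^ 2 + w ^ 2)) ≤ C * ((S - T) / S * (S ^ (γ + 1) / (max S w) ^ 2)) := by
  refine ⟨(2 * (γ + 1))⁻¹, max 1 (γ - 1)⁻¹, by positivity, by positivity, ?_⟩
  intro T S w hT hTS hw _
  rcases hTS.eq_or_lt with rfl | hTS'
  · simp
  have hS : 0 < S := hT.trans_lt hTS'
  have hshape : (S - T) / S * (S ^ (γ + 1) / max S w ^ 2) = (S - T) * S ^ γ / max S w ^ 2 := by
    rw [rpow_add_one hS.ne']
    field_simp
  rw [hshape]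
  exact ⟨le_integral_rpow_div_sq_add_sq (by linarith) hw hT hTS,
    integral_rpow_div_sq_add_sq_le hγ hw hT hTS⟩

theorem stmt3 (γ M : ℝ) (hγ : 1 < γ) (hM : 0 < M) :
    ∃ c C : ℝ, 0 < c ∧ 0 < C ∧ ∀ T S w : ℝ, 0 ≤ T → T ≤ S → 0 < w → w ≤ M →
      c * ((S - T) / S * (S ^ (γ + 1) / (max S w) ^ 2)) ≤ (∫ t in T..S, t ^ γ / (t ^ 2 + w ^ 2)) ∧
      (∫ t in T..S, t ^ γ / (t ^ 2 + w ^ 2)) ≤ C * ((S - T) / S * (S ^ (γ + 1) / (max S w) ^ 2)) :=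
  stmt3_general γ M hγ
end

section
/- Let γ ∈ (−1, 1) be fixed and M > 0. Then there exist constants c, C > 0 such that for all 0 ≤ T ≤ S < ∞ and 0 < w ≤ M, the integral J_γ(T,S,w) = ∫_T^S t^γ/(t²+w²) dt satisfies c·((S−T)/S)·(S^{γ+1}/(max(S,w))²)·(max(T,w)/max(S,w))^{γ−1} ≤ J_γ(T,S,w) ≤ C·((S−T)/S)·(S^{γ+1}/(max(S,w))²)·(max(T,w)/max(S,w))^{γ−1}. -/
/-!
Since `max t w ^ 2 ≤ t ^ 2 + w ^ 2 ≤ 2 * max t w ^ 2`, the integrand is within a factor 2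
of `t ^ γ / max t w ^ 2`, a pure power on each side of the scale `w`: `t ^ γ / w ^ 2` below
it and `t ^ (γ - 2)` above it. Both power integrals are explicit, and Bernoulli's inequality
for `1 - x ^ p` with `x = a / b` and `p = γ + 1` or `p = 1 - γ` (both in `(0, 2)`) makes
`b ^ p - a ^ p` comparable to `(b - a) / b * b ^ p`. When `T ≤ w ≤ S` the integral splits at
`w`: each piece is at most the bound, and their sum is at least it because
`(S - T) / S ≤ (w - T) / w + (S - w) / S`.
-/

open Real MeasureTheory intervalIntegral Set

lemma one_sub_rpow_mem_Icc {p x : ℝ} (hp : 0 < p) (hp2 : p ≤ 2) (hx0 : 0 ≤ x)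
    (hx1 : x ≤ 1) :
    1 - x ^ p ∈ Icc (p / 2 * (1 - x)) (2 * (1 - x)) := by
  have hs : -1 ≤ x - 1 := by linarith
  rcases le_total p 1 with hp1 | hp1
  · have bernoulli : x ^ p ≤ 1 + p * (x - 1) := by
      simpa using rpow_one_add_le_one_add_mul_self hs hp.le hp1
    have : x ≤ x ^ p := by simpa using rpow_le_rpow_of_exponent_ge' hx0 hx1 hp.le hp1
    constructor <;> nlinarith
  · have bernoulli : 1 + p * (x - 1) ≤ x ^ p := by
      simpa using one_add_mul_self_le_rpow_one_add hs hp1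
    have : x ^ p ≤ x := by simpa using rpow_le_rpow_of_exponent_ge' hx0 hx1 zero_le_one hp1
    constructor <;> nlinarith

lemma rpow_sub_rpow_mem_Icc {p a b : ℝ} (hp : 0 < p) (hp2 : p ≤ 2) (ha : 0 ≤ a)
    (hab : a ≤ b) :
    b ^ p - a ^ p ∈ Icc (p / 2 * ((b - a) / b * b ^ p)) (2 * ((b - a) / b * b ^ p)) := by
  rcases (ha.trans hab).eq_or_lt with rfl | hb
  · obtain rfl : a = 0 := le_antisymm hab ha
    simp
  have hsplit : b ^ p - a ^ p = (1 - (a / b) ^ p) * b ^ p := by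
    rw [div_rpow ha hb.le, sub_mul, div_mul_cancel₀ _ (rpow_pos_of_pos hb p).ne', one_mul]
  have hx := one_sub_rpow_mem_Icc hp hp2 (div_nonneg ha hb.le) ((div_le_one hb).2 hab)
  rw [one_sub_div hb.ne'] at hx
  rw [hsplit, ← mul_assoc, ← mul_assoc]
  exact ⟨mul_le_mul_of_nonneg_right hx.1 (rpow_nonneg hb.le p),
    mul_le_mul_of_nonneg_right hx.2 (rpow_nonneg hb.le p)⟩

lemma div_mem_Icc_of_mem_Icc {p x X : ℝ} (hp : 0 < p) (h : x ∈ Icc (p / 2 * X) (2 * X)) :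
    x / p ∈ Icc (1 / 2 * X) (2 / p * X) := by
  constructor
  · rw [le_div_iff₀ hp]; linarith [h.1]
  · rw [div_le_iff₀ hp, mul_right_comm, div_mul_cancel₀ _ hp.ne']; exact h.2

lemma integral_rpow_mem_Icc {γ a b : ℝ} (hγ1 : -1 < γ) (hγ2 : γ ≤ 1) (ha : 0 ≤ a)
    (hab : a ≤ b) :
    (∫ t in a..b, t ^ γ) ∈
      Icc (1 / 2 * ((b - a) / b * b ^ (γ + 1))) (2 / (γ + 1) * ((b - a) / b * b ^ (γ + 1))) := by
  have hp : 0 < γ + 1 := by linarith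
  rw [integral_rpow (Or.inl hγ1)]
  exact div_mem_Icc_of_mem_Icc hp (rpow_sub_rpow_mem_Icc hp (by linarith) ha hab)

lemma integral_rpow_sub_two_mem_Icc {γ a b : ℝ} (hγ1 : -1 ≤ γ) (hγ2 : γ < 1) (ha : 0 < a)
    (hab : a ≤ b) :
    (∫ t in a..b, t ^ (γ - 2)) ∈
      Icc (1 / 2 * ((b - a) / b * a ^ (γ - 1))) (2 / (1 - γ) * ((b - a) / b * a ^ (γ - 1))) := by
  have hb : 0 < b := ha.trans_le hab
  have hq : 0 < 1 - γ := by linarith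
  have h := rpow_sub_rpow_mem_Icc hq (by linarith) ha.le hab
  have inv_rpow : ∀ x : ℝ, 0 < x → x ^ (γ - 1) = (x ^ (1 - γ))⁻¹ := fun x hx => by
    rw [← rpow_neg hx.le, neg_sub]
  have h0 : (0 : ℝ) ∉ uIcc a b := by
    rw [uIcc_of_le hab]; exact fun h0 => ha.not_ge h0.1
  have hval : (∫ t in a..b, t ^ (γ - 2)) =
      a ^ (γ - 1) * b ^ (γ - 1) * (b ^ (1 - γ) - a ^ (1 - γ)) / (1 - γ) := by
    rw [integral_rpow (Or.inr ⟨by linarith, h0⟩), show γ - 2 + 1 = γ - 1 by ring,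
      inv_rpow a ha, inv_rpow b hb]
    have := rpow_pos_of_pos ha (1 - γ)
    have := rpow_pos_of_pos hb (1 - γ)
    have : γ - 1 ≠ 0 := by linarith
    field_simp
    ring
  have hscale : a ^ (γ - 1) * b ^ (γ - 1) * ((b - a) / b * b ^ (1 - γ)) =
      (b - a) / b * a ^ (γ - 1) := by
    rw [inv_rpow b hb]
    have := rpow_pos_of_pos hb (1 - γ)
    field_simp
  have hc : 0 ≤ a ^ (γ - 1) * b ^ (γ - 1) := by positivity
  rw [hval]
  refine div_mem_Icc_of_mem_Icc hq ?_
  rw [← hscale, mul_left_comm, mul_left_comm 2]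
  exact ⟨mul_le_mul_of_nonneg_left h.1 hc, mul_le_mul_of_nonneg_left h.2 hc⟩

lemma rpow_div_sq_add_sq_mem_Icc {γ t w : ℝ} (ht : 0 ≤ t) (hw : 0 < w) :
    t ^ γ / (t ^ 2 + w ^ 2) ∈ Icc (1 / 2 * (t ^ γ / max t w ^ 2)) (t ^ γ / max t w ^ 2) := by
  have hm : 0 < max t w ^ 2 := by positivity
  have h1 : max t w ^ 2 ≤ t ^ 2 + w ^ 2 := by
    rcases le_total t w with h | h <;> simp [h, sq_nonneg]
  have h2 : t ^ 2 + w ^ 2 ≤ 2 * max t w ^ 2 := by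
    nlinarith [sq_le_sq' (by linarith [le_max_left t w]) (le_max_left t w),
      sq_le_sq' (by linarith [le_max_right t w]) (le_max_right t w)]
  have hγ : 0 ≤ t ^ γ := rpow_nonneg ht γ
  constructor
  · calc 1 / 2 * (t ^ γ / max t w ^ 2) = t ^ γ / (2 * max t w ^ 2) := by ring
      _ ≤ t ^ γ / (t ^ 2 + w ^ 2) := div_le_div_of_nonneg_left hγ (by positivity) h2
  · exact div_le_div_of_nonneg_left hγ hm h1

lemma intervalIntegrable_rpow_div_sq_add_sq {γ w : ℝ} (hγ : -1 < γ) (hw : 0 < w) (a b : ℝ) :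
    IntervalIntegrable (fun t : ℝ => t ^ γ / (t ^ 2 + w ^ 2)) volume a b := by
  simp_rw [div_eq_mul_inv]
  exact (intervalIntegrable_rpow' hγ).mul_continuousOn
    (ContinuousOn.inv₀ (by fun_prop) fun t _ => by positivity)

lemma integral_mem_Icc_of_forall_mem_Icc {f g : ℝ → ℝ} {a b c : ℝ} (hab : a ≤ b)
    (hf : IntervalIntegrable f volume a b) (hg : IntervalIntegrable g volume a b)
    (h : ∀ t ∈ Icc a b, f t ∈ Icc (c * g t) (g t)) :
    (∫ t in a..b, f t) ∈ Icc (c * ∫ t in a..b, g t) (∫ t in a..b, g t) := by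
  rw [← intervalIntegral.integral_const_mul]
  exact ⟨integral_mono_on hab (hg.const_mul c) hf fun t ht => (h t ht).1,
    integral_mono_on hab hf hg fun t ht => (h t ht).2⟩

lemma mem_Icc_of_mem_Icc_of_mem_Icc {x y z c c' C : ℝ} (hc : 0 ≤ c) (hx : x ∈ Icc (c * y) y)
    (hy : y ∈ Icc (c' * z) (C * z)) : x ∈ Icc (c * c' * z) (C * z) :=
  ⟨(mul_assoc c c' z).symm ▸ (mul_le_mul_of_nonneg_left hy.1 hc).trans hx.1, hx.2.trans hy.2⟩

lemma integral_mem_Icc_of_le_scale {γ w a b : ℝ} (hγ1 : -1 < γ) (hγ2 : γ ≤ 1) (hw : 0 < w)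
    (ha : 0 ≤ a) (hab : a ≤ b) (hbw : b ≤ w) :
    (∫ t in a..b, t ^ γ / (t ^ 2 + w ^ 2)) ∈
      Icc (1 / 4 * ((b - a) / b * (b ^ (γ + 1) / w ^ 2)))
        (2 / (γ + 1) * ((b - a) / b * (b ^ (γ + 1) / w ^ 2))) := by
  have hcmp := integral_mem_Icc_of_forall_mem_Icc hab
    (intervalIntegrable_rpow_div_sq_add_sq hγ1 hw a b)
    ((intervalIntegrable_rpow' hγ1).div_const (w ^ 2)) fun t ht => by
      have := rpow_div_sq_add_sq_mem_Icc (γ := γ) (ha.trans ht.1) hw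
      rwa [max_eq_right (ht.2.trans hbw)] at this
  rw [intervalIntegral.integral_div] at hcmp
  have hI := integral_rpow_mem_Icc hγ1 hγ2 ha hab
  have hw2 : 0 ≤ w ^ 2 := sq_nonneg w
  have hdiv : (∫ t in a..b, t ^ γ) / w ^ 2 ∈
      Icc (1 / 2 * ((b - a) / b * (b ^ (γ + 1) / w ^ 2)))
        (2 / (γ + 1) * ((b - a) / b * (b ^ (γ + 1) / w ^ 2))) := by
    simp only [← mul_div_assoc]
    exact ⟨div_le_div_of_nonneg_right hI.1 hw2, div_le_div_of_nonneg_right hI.2 hw2⟩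
  rw [show (1 : ℝ) / 4 = 1 / 2 * (1 / 2) by norm_num]
  exact mem_Icc_of_mem_Icc_of_mem_Icc (by norm_num) hcmp hdiv

lemma integral_mem_Icc_of_scale_le {γ w a b : ℝ} (hγ1 : -1 < γ) (hγ2 : γ < 1) (hw : 0 < w)
    (hwa : w ≤ a) (hab : a ≤ b) :
    (∫ t in a..b, t ^ γ / (t ^ 2 + w ^ 2)) ∈
      Icc (1 / 4 * ((b - a) / b * a ^ (γ - 1))) (2 / (1 - γ) * ((b - a) / b * a ^ (γ - 1))) := by
  have ha : 0 < a := hw.trans_le hwa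
  have h0 : (0 : ℝ) ∉ uIcc a b := by
    rw [uIcc_of_le hab]; exact fun h0 => ha.not_ge h0.1
  have hcmp := integral_mem_Icc_of_forall_mem_Icc (c := 1 / 2) (g := fun t => t ^ (γ - 2)) hab
    (intervalIntegrable_rpow_div_sq_add_sq hγ1 hw a b) (intervalIntegrable_rpow (Or.inr h0))
    fun t ht => by
      have ht0 : 0 < t := ha.trans_le ht.1
      have := rpow_div_sq_add_sq_mem_Icc (γ := γ) ht0.le hw
      have hpow : t ^ γ / t ^ 2 = t ^ (γ - 2) := by rw [rpow_sub ht0, rpow_two]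
      rwa [max_eq_left (hwa.trans ht.1), hpow] at this
  rw [show (1 : ℝ) / 4 = 1 / 2 * (1 / 2) by norm_num]
  exact mem_Icc_of_mem_Icc_of_mem_Icc (by norm_num) hcmp
    (integral_rpow_sub_two_mem_Icc hγ1.le hγ2 ha hab)

lemma rpow_add_one_eq_rpow_sub_one_mul_sq {x : ℝ} (hx : 0 < x) (γ : ℝ) :
    x ^ (γ + 1) = x ^ (γ - 1) * x ^ 2 := by
  rw [← rpow_two, ← rpow_add hx]; ring_nf

lemma integral_mem_Icc_of_le_scale_le {γ w T S : ℝ} (hγ1 : -1 < γ) (hγ2 : γ < 1)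
    (hw : 0 < w) (hT : 0 ≤ T) (hTw : T ≤ w) (hwS : w ≤ S) :
    (∫ t in T..S, t ^ γ / (t ^ 2 + w ^ 2)) ∈
      Icc (1 / 4 * ((S - T) / S * w ^ (γ - 1)))
        ((2 / (γ + 1) + 2 / (1 - γ)) * ((S - T) / S * w ^ (γ - 1))) := by
  have hS : 0 < S := hw.trans_le hwS
  have hleft := integral_mem_Icc_of_le_scale hγ1 hγ2.le hw hT hTw le_rfl
  rw [rpow_add_one_eq_rpow_sub_one_mul_sq hw, mul_div_cancel_right₀ _ (by positivity)] at hleft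
  have hright := integral_mem_Icc_of_scale_le hγ1 hγ2 hw le_rfl hwS
  rw [← intervalIntegral.integral_add_adjacent_intervals
    (intervalIntegrable_rpow_div_sq_add_sq hγ1 hw T w)
    (intervalIntegrable_rpow_div_sq_add_sq hγ1 hw w S)]
  have hA : 0 ≤ w ^ (γ - 1) := rpow_nonneg hw.le _
  have hK₁ : 0 ≤ 2 / (γ + 1) := div_nonneg zero_le_two (by linarith)
  have hK₂ : 0 ≤ 2 / (1 - γ) := div_nonneg zero_le_two (by linarith)
  have hl : (w - T) / w ≤ (S - T) / S := by
    rw [div_le_div_iff₀ hw hS]; nlinarith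
  have hr : (S - w) / S ≤ (S - T) / S := by gcongr
  have hsum : (S - T) / S ≤ (w - T) / w + (S - w) / S := by
    calc (S - T) / S = (w - T) / S + (S - w) / S := by ring
      _ ≤ (w - T) / w + (S - w) / S := by gcongr
  constructor
  · calc 1 / 4 * ((S - T) / S * w ^ (γ - 1))
        ≤ 1 / 4 * ((w - T) / w * w ^ (γ - 1)) + 1 / 4 * ((S - w) / S * w ^ (γ - 1)) := by
          nlinarith
      _ ≤ _ := add_le_add hleft.1 hright.1
  · calc _ ≤ 2 / (γ + 1) * ((w - T) / w * w ^ (γ - 1))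
          + 2 / (1 - γ) * ((S - w) / S * w ^ (γ - 1)) := add_le_add hleft.2 hright.2
      _ ≤ _ := by
          rw [add_mul]
          gcongr

noncomputable def comparisonBound (γ T S w : ℝ) : ℝ :=
  (S - T) / S * (S ^ (γ + 1) / (max S w) ^ 2) * (max T w / max S w) ^ (γ - 1)

lemma comparisonBound_of_le_scale {γ T S w : ℝ} (hw : 0 < w) (hTw : T ≤ w) (hSw : S ≤ w) :
    comparisonBound γ T S w = (S - T) / S * (S ^ (γ + 1) / w ^ 2) := by
  rw [comparisonBound, max_eq_right hSw, max_eq_right hTw, div_self hw.ne', one_rpow, mul_one]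

lemma comparisonBound_of_scale_le {γ T S w : ℝ} (hw : 0 < w) (hwS : w ≤ S) :
    comparisonBound γ T S w = (S - T) / S * max T w ^ (γ - 1) := by
  have hS : 0 < S := hw.trans_le hwS
  have := rpow_pos_of_pos hS (γ - 1)
  rw [comparisonBound, max_eq_left hwS, div_rpow (hw.le.trans (le_max_right T w)) hS.le,
    rpow_add_one_eq_rpow_sub_one_mul_sq hS]
  field_simp

lemma integral_mem_Icc_comparisonBound {γ T S w : ℝ} (hγ1 : -1 < γ) (hγ2 : γ < 1)
    (hT : 0 ≤ T) (hTS : T ≤ S) (hw : 0 < w) :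
    (∫ t in T..S, t ^ γ / (t ^ 2 + w ^ 2)) ∈
      Icc (1 / 4 * comparisonBound γ T S w)
        ((2 / (γ + 1) + 2 / (1 - γ)) * comparisonBound γ T S w) := by
  have hK₁ : 0 ≤ 2 / (γ + 1) := div_nonneg zero_le_two (by linarith)
  have hK₂ : 0 ≤ 2 / (1 - γ) := div_nonneg zero_le_two (by linarith)
  rcases le_total w T with hwT | hTw
  · have hwS := hwT.trans hTS
    rw [comparisonBound_of_scale_le hw hwS, max_eq_left hwT]
    refine Icc_subset_Icc le_rfl ?_ (integral_mem_Icc_of_scale_le hγ1 hγ2 hw hwT hTS)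
    have : 0 ≤ (S - T) / S * T ^ (γ - 1) :=
      mul_nonneg (div_nonneg (by linarith) (hw.le.trans hwS)) (rpow_nonneg (hw.le.trans hwT) _)
    gcongr
    exact le_add_of_nonneg_left hK₁
  rcases le_total S w with hSw | hwS
  · rw [comparisonBound_of_le_scale hw hTw hSw]
    refine Icc_subset_Icc le_rfl ?_ (integral_mem_Icc_of_le_scale hγ1 hγ2.le hw hT hTS hSw)
    have : 0 ≤ (S - T) / S * (S ^ (γ + 1) / w ^ 2) :=
      mul_nonneg (div_nonneg (by linarith) (hT.trans hTS))
        (div_nonneg (rpow_nonneg (hT.trans hTS) _) (sq_nonneg w))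
    gcongr
    exact le_add_of_nonneg_right hK₂
  · rw [comparisonBound_of_scale_le hw hwS, max_eq_right hTw]
    exact integral_mem_Icc_of_le_scale_le hγ1 hγ2 hw hT hTw hwS

theorem stmt4_general (γ M : ℝ) (hγ1 : -1 < γ) (hγ2 : γ < 1) :
    ∃ c C : ℝ, 0 < c ∧ 0 < C ∧ ∀ T S w : ℝ, 0 ≤ T → T ≤ S → 0 < w → w ≤ M →
      c * ((S - T) / S * (S ^ (γ + 1) / (max S w) ^ 2) * (max T w / max S w) ^ (γ - 1))
          ≤ (∫ t in T..S, t ^ γ / (t ^ 2 + w ^ 2)) ∧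
      (∫ t in T..S, t ^ γ / (t ^ 2 + w ^ 2))
          ≤ C * ((S - T) / S * (S ^ (γ + 1) / (max S w) ^ 2) * (max T w / max S w) ^ (γ - 1)) :=
  ⟨1 / 4, 2 / (γ + 1) + 2 / (1 - γ), by norm_num,
    add_pos (div_pos two_pos (by linarith)) (div_pos two_pos (by linarith)),
    fun _ _ _ hT hTS hw _ => integral_mem_Icc_comparisonBound hγ1 hγ2 hT hTS hw⟩

theorem stmt4 (γ M : ℝ) (hγ1 : -1 < γ) (hγ2 : γ < 1) (hM : 0 < M) :
    ∃ c C : ℝ, 0 < c ∧ 0 < C ∧ ∀ T S w : ℝ, 0 ≤ T → T ≤ S → 0 < w → w ≤ M →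
      c * ((S - T) / S * (S ^ (γ + 1) / (max S w) ^ 2) * (max T w / max S w) ^ (γ - 1))
          ≤ (∫ t in T..S, t ^ γ / (t ^ 2 + w ^ 2)) ∧
      (∫ t in T..S, t ^ γ / (t ^ 2 + w ^ 2))
          ≤ C * ((S - T) / S * (S ^ (γ + 1) / (max S w) ^ 2) * (max T w / max S w) ^ (γ - 1)) :=
  stmt4_general γ M hγ1 hγ2
end

section
/- Let M > 0 be fixed. Then there exist constants c, C > 0 such that for all 0 < T ≤ S < ∞ and 0 < w ≤ M, the integral J₁(T,S,w) = ∫_T^S t/(t²+w²) dt satisfies c·((S−T)/S)·(S²/(max(S,w))²)·(1 + log⁺(S/max(T,w))) ≤ J₁(T,S,w) ≤ C·((S−T)/S)·(S²/(max(S,w))²)·(1 + log⁺(S/max(T,w))), where log⁺ x = max(log x, 0). -/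
/-!
Since `J₁(T,S,w) = ½ log u` with `u = (S²+w²)/(T²+w²) ≥ 1`, everything reduces to the
elementary comparison `½ (1 - u⁻¹)(1 + log u) ≤ log u ≤ (1 - u⁻¹)(1 + log u)` for `u ≥ 1`.
Up to factors of 2, `1 - u⁻¹ = (S²-T²)/(S²+w²)` is `((S-T)/S)·(S²/max(S,w)²)`, and
`log u` is `2 log (max(S,w)/max(T,w)) ± log 2`, where `log (max(S,w)/max(T,w))` is the `log⁺` term.
-/

open Real Set

lemma integral_id_div_sq_add_sq {w : ℝ} (hw : w ≠ 0) (a b : ℝ) :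
    ∫ t in a..b, t / (t ^ 2 + w ^ 2) = log ((b ^ 2 + w ^ 2) / (a ^ 2 + w ^ 2)) / 2 := by
  have hpos : ∀ t : ℝ, 0 < t ^ 2 + w ^ 2 := fun t => by positivity
  have hderiv : ∀ t ∈ uIcc a b,
      HasDerivAt (fun t => log (t ^ 2 + w ^ 2) / 2) (t / (t ^ 2 + w ^ 2)) t := by
    intro t _
    have h := ((((hasDerivAt_pow 2 t).add_const (w ^ 2)).log (hpos t).ne').div_const 2)
    refine h.congr_deriv ?_
    simp only [Nat.cast_ofNat, pow_one, Nat.add_one_sub_one]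
    ring
  have hint : IntervalIntegrable (fun t => t / (t ^ 2 + w ^ 2)) MeasureTheory.volume a b :=
    (continuous_id.div (by fun_prop) fun t => (hpos t).ne').intervalIntegrable a b
  rw [intervalIntegral.integral_eq_sub_of_hasDerivAt hderiv hint,
    log_div (hpos b).ne' (hpos a).ne', sub_div]

lemma log_le_one_sub_inv_mul_one_add_log {u : ℝ} (hu : 0 < u) :
    log u ≤ (1 - u⁻¹) * (1 + log u) := by
  have h : (1 + log u) / u ≤ 1 := by
    rw [div_le_one hu]
    linarith [log_le_sub_one_of_pos hu]
  have hexp : (1 - u⁻¹) * (1 + log u) = log u + (1 - (1 + log u) / u) := by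
    field_simp
    ring
  linarith

lemma one_sub_inv_mul_one_add_log_le {u : ℝ} (hu : 1 ≤ u) :
    (1 - u⁻¹) * (1 + log u) ≤ 2 * log u := by
  have hlog : 1 - u⁻¹ ≤ log u := one_sub_inv_le_log_of_pos (by positivity)
  have hinv : 0 ≤ u⁻¹ := by positivity
  have hlog_nonneg : 0 ≤ log u := log_nonneg hu
  nlinarith

lemma log_sq_add_sq_mem_Icc {a b : ℝ} (ha : 0 ≤ a) (hb : 0 < b) :
    log (a ^ 2 + b ^ 2) ∈ Icc (2 * log (max a b)) (log 2 + 2 * log (max a b)) := by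
  have hmax : 0 < max a b := lt_max_of_lt_right hb
  have hsq : max a b ^ 2 ≤ a ^ 2 + b ^ 2 := by
    rcases max_cases a b with ⟨h, _⟩ | ⟨h, _⟩ <;> rw [h] <;> nlinarith
  have hsq' : a ^ 2 + b ^ 2 ≤ 2 * max a b ^ 2 := by
    nlinarith [le_max_left a b, le_max_right a b]
  have hlog_sq : log (max a b ^ 2) = 2 * log (max a b) := by
    rw [log_pow]
    norm_num
  constructor
  · rw [← hlog_sq]
    exact log_le_log (by positivity) hsq
  · rw [← hlog_sq, ← log_mul two_ne_zero (by positivity)]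
    exact log_le_log (by positivity) hsq'

lemma sq_sub_sq_div_sq_add_sq_mem_Icc {T S w : ℝ} (hT : 0 ≤ T) (hTS : T ≤ S) (hS : 0 < S)
    (hw : 0 ≤ w) :
    (S ^ 2 - T ^ 2) / (S ^ 2 + w ^ 2) ∈
      Icc ((S - T) / S * (S ^ 2 / max S w ^ 2) / 2) (2 * ((S - T) / S * (S ^ 2 / max S w ^ 2))) := by
  have hmax : 0 < max S w := lt_max_of_lt_left hS
  have hsq : max S w ^ 2 ≤ S ^ 2 + w ^ 2 := by
    rcases max_cases S w with ⟨h, _⟩ | ⟨h, _⟩ <;> rw [h] <;> nlinarith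
  have hsq' : S ^ 2 + w ^ 2 ≤ 2 * max S w ^ 2 := by
    nlinarith [le_max_left S w, le_max_right S w]
  have hgap : (S - T) * S ≤ S ^ 2 - T ^ 2 := by nlinarith
  have hgap' : S ^ 2 - T ^ 2 ≤ 2 * ((S - T) * S) := by nlinarith
  have hscale : (S - T) / S * (S ^ 2 / max S w ^ 2) = (S - T) * S / max S w ^ 2 := by
    field_simp
  rw [hscale]
  constructor
  · rw [div_div, div_le_div_iff₀ (by positivity) (by positivity)]
    nlinarith [mul_nonneg (sub_nonneg.mpr hTS) hS.le]
  · rw [div_le_iff₀ (by positivity)]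
    calc S ^ 2 - T ^ 2 ≤ 2 * ((S - T) * S / max S w ^ 2) * max S w ^ 2 := by
          rwa [mul_assoc, div_mul_cancel₀ _ (by positivity)]
      _ ≤ 2 * ((S - T) * S / max S w ^ 2) * (S ^ 2 + w ^ 2) := by
          gcongr

lemma max_log_div_max_zero {T S w : ℝ} (hT : 0 ≤ T) (hTS : T ≤ S) (hw : 0 < w) :
    max (log (S / max T w)) 0 = log (max S w / max T w) := by
  rcases le_total w S with hwS | hSw
  · rw [max_eq_left hwS]
    exact max_eq_left (log_nonneg ((one_le_div (lt_max_of_lt_right hw)).mpr (max_le hTS hwS)))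
  · rw [max_eq_right hSw, max_eq_right (hTS.trans hSw), div_self hw.ne', log_one]
    exact max_eq_right (log_nonpos (div_nonneg (hT.trans hTS) hw.le) ((div_le_one hw).mpr hSw))

lemma one_add_log_sq_add_sq_div_mem_Icc {T S w : ℝ} (hT : 0 ≤ T) (hTS : T ≤ S) (hw : 0 < w) :
    1 + log ((S ^ 2 + w ^ 2) / (T ^ 2 + w ^ 2)) ∈
      Icc ((1 + log (max S w / max T w)) / 2) (2 * (1 + log (max S w / max T w))) := by
  have hS : 0 ≤ S := hT.trans hTS
  have hB : 0 < max T w := lt_max_of_lt_right hw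
  obtain ⟨hX, hX'⟩ := log_sq_add_sq_mem_Icc hS hw
  obtain ⟨hY, hY'⟩ := log_sq_add_sq_mem_Icc hT hw
  have hL : 0 ≤ log (max S w / max T w) :=
    log_nonneg ((one_le_div hB).mpr (max_le_max hTS le_rfl))
  have hu : 0 ≤ log ((S ^ 2 + w ^ 2) / (T ^ 2 + w ^ 2)) :=
    log_nonneg ((one_le_div (by positivity)).mpr (by nlinarith))
  have hlog2 : log 2 ≤ 1 := by linarith [log_two_lt_d9]
  rw [log_div (by positivity : S ^ 2 + w ^ 2 ≠ 0) (by positivity : T ^ 2 + w ^ 2 ≠ 0)] at hu ⊢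
  rw [log_div (lt_max_of_lt_right hw).ne' hB.ne'] at hL ⊢
  constructor <;> linarith

theorem stmt6_general (M : ℝ) :
    ∃ c C : ℝ, 0 < c ∧ 0 < C ∧ ∀ T S w : ℝ, 0 < T → T ≤ S → 0 < w → w ≤ M →
      c * ((S - T) / S * (S ^ 2 / (max S w) ^ 2) * (1 + max (Real.log (S / max T w)) 0))
          ≤ (∫ t in T..S, t / (t ^ 2 + w ^ 2)) ∧
      (∫ t in T..S, t / (t ^ 2 + w ^ 2))
          ≤ C * ((S - T) / S * (S ^ 2 / (max S w) ^ 2) * (1 + max (Real.log (S / max T w)) 0)) := by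
  refine ⟨1 / 16, 2, by norm_num, by norm_num, fun T S w hT hTS hw _ => ?_⟩
  have hS : 0 < S := hT.trans_le hTS
  rw [integral_id_div_sq_add_sq hw.ne', max_log_div_max_zero hT.le hTS hw]
  have hu : 1 ≤ (S ^ 2 + w ^ 2) / (T ^ 2 + w ^ 2) :=
    (one_le_div (by positivity)).mpr (by nlinarith)
  have hinv : 1 - ((S ^ 2 + w ^ 2) / (T ^ 2 + w ^ 2))⁻¹ = (S ^ 2 - T ^ 2) / (S ^ 2 + w ^ 2) := by
    field_simp
    ring
  obtain ⟨hP, hP'⟩ := hinv ▸ sq_sub_sq_div_sq_add_sq_mem_Icc hT.le hTS hS hw.le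
  obtain ⟨hQ, hQ'⟩ := one_add_log_sq_add_sq_div_mem_Icc hT.le hTS hw
  have hφ := log_le_one_sub_inv_mul_one_add_log (zero_lt_one.trans_le hu)
  have hφ' := one_sub_inv_mul_one_add_log_le hu
  set u := (S ^ 2 + w ^ 2) / (T ^ 2 + w ^ 2)
  set E := (S - T) / S * (S ^ 2 / max S w ^ 2)
  set L := log (max S w / max T w)
  constructor
  · calc 1 / 16 * (E * (1 + L)) = E / 2 * ((1 + L) / 2) / 4 := by ring
      _ ≤ (1 - u⁻¹) * (1 + log u) / 4 := by gcongr <;> linarith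
      _ ≤ log u / 2 := by linarith
  · calc log u / 2 ≤ (1 - u⁻¹) * (1 + log u) / 2 := by linarith
      _ ≤ 2 * E * (2 * (1 + L)) / 2 := by gcongr; linarith
      _ = 2 * (E * (1 + L)) := by ring

theorem stmt6 (M : ℝ) (hM : 0 < M) :
    ∃ c C : ℝ, 0 < c ∧ 0 < C ∧ ∀ T S w : ℝ, 0 < T → T ≤ S → 0 < w → w ≤ M →
      c * ((S - T) / S * (S ^ 2 / (max S w) ^ 2) * (1 + max (Real.log (S / max T w)) 0))
          ≤ (∫ t in T..S, t / (t ^ 2 + w ^ 2)) ∧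
      (∫ t in T..S, t / (t ^ 2 + w ^ 2))
          ≤ C * ((S - T) / S * (S ^ 2 / (max S w) ^ 2) * (1 + max (Real.log (S / max T w)) 0)) :=
  stmt6_general M
end

section
/- Let M > 0 be fixed. Then there exist constants c, C > 0 such that for all 0 < T ≤ S < ∞ and 0 < w ≤ M, the integral J_{−1}(T,S,w) = ∫_T^S t^{−1}/(t²+w²) dt satisfies c·((S−T)/S)·(1/(max(T,w))²)·(1 + log⁺(min(S,w)/T)) ≤ J_{−1}(T,S,w) ≤ C·((S−T)/S)·(1/(max(T,w))²)·(1 + log⁺(min(S,w)/T)). -/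
open Real Set

/-! The integrand has the primitive `log (t² / (t² + w²)) / (2w²)`, so `2w² J` is the logarithm of
`R = S²(T² + w²) / (T²(S² + w²))`. If `w ≤ T`, then `1 - 1/R ≤ log R ≤ R - 1` and `R - 1` is
comparable to `w²(S - T) / (S T²)`. If `S ≤ w`, then `S/T ≤ R ≤ (S/T)²`, and
`log u ≤ (1 - 1/u)(1 + log u) ≤ 2 log u` for `u ≥ 1`. If `T ≤ w ≤ S`, split the integral at `w`
and add the two previous cases. -/

noncomputable def J (T S w : ℝ) : ℝ := ∫ t in T..S, (1 / t) / (t ^ 2 + w ^ 2)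

noncomputable def Japprox (T S w : ℝ) : ℝ :=
  (S - T) / S * (1 / (max T w) ^ 2) * (1 + max (log (min S w / T)) 0)

section

variable {T S w : ℝ}

lemma hasDerivAt_log_sq_div_sq_add_sq {t : ℝ} (ht : t ≠ 0) (hw : w ≠ 0) :
    HasDerivAt (fun t => log (t ^ 2 / (t ^ 2 + w ^ 2)) / (2 * w ^ 2))
      ((1 / t) / (t ^ 2 + w ^ 2)) t := by
  have hden : t ^ 2 + w ^ 2 ≠ 0 := by positivity
  have := (((hasDerivAt_pow 2 t).fun_div ((hasDerivAt_pow 2 t).add_const (w ^ 2)) hden).log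
    (div_ne_zero (pow_ne_zero 2 ht) hden)).div_const (2 * w ^ 2)
  refine this.congr_deriv ?_
  field_simp
  ring

lemma pos_of_mem_uIcc (hT : 0 < T) (hS : 0 < S) {t : ℝ} (ht : t ∈ uIcc T S) : 0 < t :=
  (lt_min hT hS).trans_le ht.1

lemma intervalIntegrable_inv_div_sq_add_sq (hT : 0 < T) (hS : 0 < S) :
    IntervalIntegrable (fun t => (1 / t) / (t ^ 2 + w ^ 2)) MeasureTheory.volume T S := by
  refine ContinuousOn.intervalIntegrable fun t ht => ?_
  have := (pos_of_mem_uIcc hT hS ht).ne'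
  exact ContinuousAt.continuousWithinAt (by fun_prop (disch := positivity))

lemma J_eq_log (hT : 0 < T) (hS : 0 < S) (hw : w ≠ 0) :
    J T S w = log (S ^ 2 * (T ^ 2 + w ^ 2) / (T ^ 2 * (S ^ 2 + w ^ 2))) / (2 * w ^ 2) := by
  rw [J, intervalIntegral.integral_eq_sub_of_hasDerivAt
      (fun t ht => hasDerivAt_log_sq_div_sq_add_sq (pos_of_mem_uIcc hT hS ht).ne' hw)
      (intervalIntegrable_inv_div_sq_add_sq hT hS),
    ← sub_div, ← log_div (by positivity) (by positivity)]
  congr 2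
  field_simp

lemma J_add {R : ℝ} (hT : 0 < T) (hR : 0 < R) (hS : 0 < S) : J T R w + J R S w = J T S w :=
  intervalIntegral.integral_add_adjacent_intervals
    (intervalIntegrable_inv_div_sq_add_sq hT hR) (intervalIntegrable_inv_div_sq_add_sq hR hS)

lemma J_bounds_of_le_left (hw : 0 < w) (hwT : w ≤ T) (hTS : T ≤ S) :
    1 / 4 * ((S - T) / S * (1 / T ^ 2)) ≤ J T S w ∧ J T S w ≤ (S - T) / S * (1 / T ^ 2) := by
  have hT : 0 < T := hw.trans_le hwT
  have hS : 0 < S := hT.trans_le hTS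
  have hST : 0 ≤ w ^ 2 * (S - T) := mul_nonneg (sq_nonneg w) (sub_nonneg.2 hTS)
  set R := S ^ 2 * (T ^ 2 + w ^ 2) / (T ^ 2 * (S ^ 2 + w ^ 2)) with hR
  have hR0 : 0 < R := by positivity
  have hlow : w ^ 2 * (S - T) / (2 * S * T ^ 2) ≤ 1 - R⁻¹ := by
    rw [hR, inv_div, one_sub_div (by positivity), div_le_div_iff₀ (by positivity) (by positivity)]
    nlinarith [mul_nonneg hST (mul_nonneg (sq_nonneg S) (sub_nonneg.2 (pow_le_pow_left₀ hw.le hwT 2))),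
      mul_nonneg hST (mul_pos hS (pow_pos hT 3)).le]
  have hup : R - 1 ≤ 2 * w ^ 2 * (S - T) / (S * T ^ 2) := by
    rw [hR, div_sub_one (by positivity), div_le_div_iff₀ (by positivity) (by positivity)]
    nlinarith [mul_nonneg hST (mul_nonneg (sq_nonneg T) (mul_nonneg hS.le (sub_nonneg.2 hTS))),
      mul_nonneg hST (mul_nonneg (sq_nonneg T) (sq_nonneg w))]
  rw [J_eq_log hT hS hw.ne', ← hR, le_div_iff₀ (by positivity), div_le_iff₀ (by positivity)]
  constructor
  · calc 1 / 4 * ((S - T) / S * (1 / T ^ 2)) * (2 * w ^ 2) = w ^ 2 * (S - T) / (2 * S * T ^ 2) := by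
          field_simp; ring
      _ ≤ log R := hlow.trans (one_sub_inv_le_log_of_pos hR0)
  · calc log R ≤ 2 * w ^ 2 * (S - T) / (S * T ^ 2) := (log_le_sub_one_of_pos hR0).trans hup
      _ = (S - T) / S * (1 / T ^ 2) * (2 * w ^ 2) := by field_simp

lemma J_bounds_of_right_le (hT : 0 < T) (hTS : T ≤ S) (hSw : S ≤ w) :
    1 / 4 * ((S - T) / S * (1 / w ^ 2) * (1 + log (S / T))) ≤ J T S w ∧
      J T S w ≤ (S - T) / S * (1 / w ^ 2) * (1 + log (S / T)) := by
  have hS : 0 < S := hT.trans_le hTS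
  have hw : 0 < w := hS.trans_le hSw
  have hu : 1 ≤ S / T := (one_le_div hT).2 hTS
  have hinv : 1 - (S / T)⁻¹ = (S - T) / S := by field_simp
  have hg_low := log_le_one_sub_inv_mul_one_add_log (zero_lt_one.trans_le hu)
  have hg_up := one_sub_inv_mul_one_add_log_le hu
  rw [hinv] at hg_low hg_up
  set R := S ^ 2 * (T ^ 2 + w ^ 2) / (T ^ 2 * (S ^ 2 + w ^ 2)) with hR
  have hlow : log (S / T) ≤ log R := by
    refine log_le_log (by positivity) ?_
    rw [hR, div_le_div_iff₀ hT (by positivity)]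
    nlinarith [mul_nonneg (mul_nonneg (sub_nonneg.2 hTS)
      (sub_nonneg.2 (mul_le_mul hSw (hTS.trans hSw) hT.le hw.le))) (mul_pos hS hT).le]
  have hup : log R ≤ 2 * log (S / T) := by
    have hsq : log ((S / T) ^ 2) = 2 * log (S / T) := by norm_num [log_pow]
    rw [← hsq]
    refine log_le_log (by positivity) ?_
    rw [hR, div_pow, div_le_div_iff₀ (by positivity) (by positivity)]
    nlinarith [mul_nonneg (mul_nonneg (sq_nonneg S) (sq_nonneg T))
      (sub_nonneg.2 (pow_le_pow_left₀ hT.le hTS 2))]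
  rw [J_eq_log hT hS hw.ne', ← hR, le_div_iff₀ (by positivity), div_le_iff₀ (by positivity)]
  constructor
  · calc 1 / 4 * ((S - T) / S * (1 / w ^ 2) * (1 + log (S / T))) * (2 * w ^ 2)
          = 1 / 2 * ((S - T) / S * (1 + log (S / T))) := by field_simp; ring
      _ ≤ log R := by linarith
  · calc log R ≤ (S - T) / S * (1 + log (S / T)) * 2 := by linarith
      _ = (S - T) / S * (1 / w ^ 2) * (1 + log (S / T)) * (2 * w ^ 2) := by field_simp

lemma J_bounds_of_mem_Icc (hT : 0 < T) (hTw : T ≤ w) (hwS : w ≤ S) :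
    1 / 8 * ((S - T) / S * (1 / w ^ 2) * (1 + log (w / T))) ≤ J T S w ∧
      J T S w ≤ 2 * ((S - T) / S * (1 / w ^ 2) * (1 + log (w / T))) := by
  have hw : 0 < w := hT.trans_le hTw
  have hS : 0 < S := hw.trans_le hwS
  obtain ⟨hleft_low, hleft_up⟩ := J_bounds_of_right_le hT hTw le_rfl
  obtain ⟨hright_low, hright_up⟩ := J_bounds_of_le_left hw le_rfl hwS
  have hL : log (w / T) ≤ (w - T) / w * (1 + log (w / T)) := by
    have := log_le_one_sub_inv_mul_one_add_log (div_pos hw hT)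
    rwa [show 1 - (w / T)⁻¹ = (w - T) / w by field_simp] at this
  have hL0 : 0 ≤ log (w / T) := log_nonneg ((one_le_div hT).2 hTw)
  set L := log (w / T)
  have ha0 : 0 ≤ (w - T) / w := div_nonneg (by linarith) hw.le
  have hb1 : (S - w) / S ≤ 1 := by rw [div_le_one hS]; linarith
  have hac : (w - T) / w ≤ (S - T) / S := by
    rw [div_le_div_iff₀ hw hS]; nlinarith
  have hbc : (S - w) / S ≤ (S - T) / S := by gcongr
  have hcab : (S - T) / S ≤ (w - T) / w + (S - w) / S := by
    have : (w - T) / S ≤ (w - T) / w := by gcongr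
    linarith [show (S - T) / S = (w - T) / S + (S - w) / S by ring]
  have hk : 0 < 1 / w ^ 2 := by positivity
  have key_up : (w - T) / w * (1 + L) + (S - w) / S ≤ 2 * ((S - T) / S * (1 + L)) := by
    linarith [mul_le_mul_of_nonneg_right hac (by linarith : 0 ≤ 1 + L),
      mul_nonneg (ha0.trans hac) hL0]
  -- the excess `(S - w) / S * L` is absorbed by `hL`
  have key_low : (S - T) / S * (1 + L) ≤ 2 * ((w - T) / w * (1 + L) + (S - w) / S) := by
    linarith [mul_le_mul_of_nonneg_right hcab (by linarith : 0 ≤ 1 + L),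
      mul_le_mul_of_nonneg_right hb1 hL0]
  rw [← J_add hT hw hS]
  constructor
  · linarith [mul_le_mul_of_nonneg_right key_low hk.le]
  · linarith [mul_le_mul_of_nonneg_right key_up hk.le]

lemma Japprox_of_le_left (hT : 0 < T) (hw : 0 < w) (hwT : w ≤ T) (hTS : T ≤ S) :
    Japprox T S w = (S - T) / S * (1 / T ^ 2) := by
  rw [Japprox, max_eq_left hwT, min_eq_right (hwT.trans hTS),
    max_eq_right (log_nonpos (by positivity) ((div_le_one hT).2 hwT)), add_zero, mul_one]

lemma Japprox_of_right_le (hT : 0 < T) (hTS : T ≤ S) (hSw : S ≤ w) :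
    Japprox T S w = (S - T) / S * (1 / w ^ 2) * (1 + log (S / T)) := by
  rw [Japprox, max_eq_right (hTS.trans hSw), min_eq_left hSw,
    max_eq_left (log_nonneg ((one_le_div hT).2 hTS))]

lemma Japprox_of_mem_Icc (hT : 0 < T) (hTw : T ≤ w) (hwS : w ≤ S) :
    Japprox T S w = (S - T) / S * (1 / w ^ 2) * (1 + log (w / T)) := by
  rw [Japprox, max_eq_right hTw, min_eq_right hwS,
    max_eq_left (log_nonneg ((one_le_div hT).2 hTw))]

lemma Japprox_nonneg (hT : 0 < T) (hTS : T ≤ S) : 0 ≤ Japprox T S w := by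
  unfold Japprox
  have : 0 ≤ (S - T) / S := div_nonneg (by linarith) (by linarith)
  positivity

theorem J_bounds (hT : 0 < T) (hTS : T ≤ S) (hw : 0 < w) :
    1 / 8 * Japprox T S w ≤ J T S w ∧ J T S w ≤ 2 * Japprox T S w := by
  have h₀ := Japprox_nonneg (w := w) hT hTS
  rcases le_total w T with hwT | hTw
  · rw [Japprox_of_le_left hT hw hwT hTS] at h₀ ⊢
    have := J_bounds_of_le_left hw hwT hTS
    constructor <;> linarith
  rcases le_total S w with hSw | hwS
  · rw [Japprox_of_right_le hT hTS hSw] at h₀ ⊢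
    have := J_bounds_of_right_le hT hTS hSw
    constructor <;> linarith
  · rw [Japprox_of_mem_Icc hT hTw hwS]
    exact J_bounds_of_mem_Icc hT hTw hwS

end

theorem stmt7_general (M : ℝ) :
    ∃ c C : ℝ, 0 < c ∧ 0 < C ∧ ∀ T S w : ℝ, 0 < T → T ≤ S → 0 < w → w ≤ M →
      c * ((S - T) / S * (1 / (max T w) ^ 2) * (1 + max (Real.log (min S w / T)) 0))
          ≤ (∫ t in T..S, (1 / t) / (t ^ 2 + w ^ 2)) ∧
      (∫ t in T..S, (1 / t) / (t ^ 2 + w ^ 2))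
          ≤ C * ((S - T) / S * (1 / (max T w) ^ 2) * (1 + max (Real.log (min S w / T)) 0)) :=
  ⟨1 / 8, 2, by norm_num, by norm_num, fun _ _ _ hT hTS hw _ => J_bounds hT hTS hw⟩

theorem stmt7 (M : ℝ) (hM : 0 < M) :
    ∃ c C : ℝ, 0 < c ∧ 0 < C ∧ ∀ T S w : ℝ, 0 < T → T ≤ S → 0 < w → w ≤ M →
      c * ((S - T) / S * (1 / (max T w) ^ 2) * (1 + max (Real.log (min S w / T)) 0))
          ≤ (∫ t in T..S, (1 / t) / (t ^ 2 + w ^ 2)) ∧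
      (∫ t in T..S, (1 / t) / (t ^ 2 + w ^ 2))
          ≤ C * ((S - T) / S * (1 / (max T w) ^ 2) * (1 + max (Real.log (min S w / T)) 0)) :=
  stmt7_general M
end

section
/- Let 0 < w ≤ 1 and 0 < T < w, and let γ > 1. Then the quantity (1/w²)·∫_T^w t^γ dt + ∫_w^1 t^{γ−2} dt is comparable (with constants depending only on γ) to 1−T, uniformly in 0 < T < w ≤ 1. -/
/-!
Since `1 / w ^ 2 ≥ 1` and `t ^ (γ - 2) ≥ t ^ γ` for `t ≤ 1`, the quantity is at least
`∫ t in T..1, t ^ γ`; since `t ^ γ / w ^ 2 ≤ t ^ (γ - 2)` for `t ≤ w`, it is at most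
`∫ t in T..1, t ^ (γ - 2)`. Both integrals are explicit, and Bernoulli's inequality
compares `1 - T ^ β` with `1 - T`.
-/

open Real intervalIntegral

lemma one_sub_rpow_le_max_mul {x β : ℝ} (hx0 : 0 ≤ x) (hx1 : x ≤ 1) :
    1 - x ^ β ≤ max 1 β * (1 - x) := by
  rcases le_total β 1 with hβ1 | hβ1
  · have := self_le_rpow_of_le_one hx0 hx1 hβ1
    rw [max_eq_left hβ1]
    linarith
  · have := one_add_mul_self_le_rpow_one_add (s := x - 1) (by linarith) hβ1
    rw [add_sub_cancel] at this
    rw [max_eq_right hβ1]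
    linarith

lemma intervalIntegrable_rpow_of_pos {a b : ℝ} (r : ℝ) (ha : 0 < a) (hab : a ≤ b) :
    IntervalIntegrable (fun t : ℝ => t ^ r) MeasureTheory.volume a b :=
  intervalIntegrable_rpow (Or.inr fun h0 => by
    rw [Set.mem_uIcc] at h0
    rcases h0 with h | h <;> linarith [h.1])

lemma integral_rpow_le_weighted_sum {T w : ℝ} (γ : ℝ) (hT : 0 < T) (hTw : T ≤ w)
    (hw1 : w ≤ 1) :
    ∫ t in T..1, t ^ γ ≤ (1 / w ^ 2) * (∫ t in T..w, t ^ γ) + ∫ t in w..1, t ^ (γ - 2) := by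
  have hw : 0 < w := hT.trans_le hTw
  rw [← integral_add_adjacent_intervals (intervalIntegrable_rpow_of_pos γ hT hTw)
    (intervalIntegrable_rpow_of_pos γ hw hw1)]
  gcongr ?_ + ?_
  · refine le_mul_of_one_le_left (integral_nonneg hTw fun t ht => ?_) ?_
    · exact rpow_nonneg (hT.le.trans ht.1) γ
    · rw [le_div_iff₀ (by positivity), one_mul]
      nlinarith
  · refine integral_mono_on hw1 (intervalIntegrable_rpow_of_pos γ hw hw1)
      (intervalIntegrable_rpow_of_pos _ hw hw1) fun t ht => ?_
    exact rpow_le_rpow_of_exponent_ge (hw.trans_le ht.1) ht.2 (by linarith)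

lemma weighted_sum_le_integral_rpow {T w : ℝ} (γ : ℝ) (hT : 0 < T) (hTw : T ≤ w)
    (hw1 : w ≤ 1) :
    (1 / w ^ 2) * (∫ t in T..w, t ^ γ) + ∫ t in w..1, t ^ (γ - 2) ≤
      ∫ t in T..1, t ^ (γ - 2) := by
  have hw : 0 < w := hT.trans_le hTw
  rw [← integral_add_adjacent_intervals (intervalIntegrable_rpow_of_pos _ hT hTw)
    (intervalIntegrable_rpow_of_pos _ hw hw1), ← integral_const_mul]
  gcongr ?_ + _
  refine integral_mono_on hTw ((intervalIntegrable_rpow_of_pos γ hT hTw).const_mul _)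
    (intervalIntegrable_rpow_of_pos _ hT hTw) fun t ht => ?_
  have ht0 : 0 < t := hT.trans_le ht.1
  rw [rpow_sub ht0, rpow_two, one_div_mul_eq_div]
  exact div_le_div_of_nonneg_left (rpow_nonneg ht0.le γ) (by positivity) (by nlinarith [ht.2])

lemma one_sub_div_le_integral_rpow {T r : ℝ} (hr : 0 ≤ r) (hT0 : 0 ≤ T) (hT1 : T ≤ 1) :
    (1 - T) / (r + 1) ≤ ∫ t in T..1, t ^ r := by
  rw [integral_rpow (Or.inl (by linarith)), one_rpow]
  gcongr
  exact rpow_le_self_of_le_one hT0 hT1 (by linarith)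

lemma integral_rpow_le_mul_one_sub {T r : ℝ} (hr : -1 < r) (hT0 : 0 ≤ T) (hT1 : T ≤ 1) :
    ∫ t in T..1, t ^ r ≤ max 1 (r + 1) / (r + 1) * (1 - T) := by
  rw [integral_rpow (Or.inl hr), one_rpow, div_mul_eq_mul_div]
  gcongr
  · linarith
  · exact one_sub_rpow_le_max_mul hT0 hT1

theorem stmt8 (γ : ℝ) (hγ : 1 < γ) :
    ∃ c C : ℝ, 0 < c ∧ 0 < C ∧ ∀ T w : ℝ, 0 < T → T < w → w ≤ 1 →
      c * (1 - T) ≤ (1 / w ^ 2) * (∫ t in T..w, t ^ γ) + (∫ t in w..(1 : ℝ), t ^ (γ - 2)) ∧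
      (1 / w ^ 2) * (∫ t in T..w, t ^ γ) + (∫ t in w..(1 : ℝ), t ^ (γ - 2)) ≤ C * (1 - T) := by
  have hγ1 : 0 < γ - 1 := by linarith
  refine ⟨1 / (γ + 1), max 1 (γ - 1) / (γ - 1), by positivity,
    div_pos (lt_max_of_lt_left one_pos) hγ1, fun T w hT hTw hw1 => ⟨?_, ?_⟩⟩
  · calc 1 / (γ + 1) * (1 - T) = (1 - T) / (γ + 1) := by ring
      _ ≤ ∫ t in T..1, t ^ γ := one_sub_div_le_integral_rpow (by linarith) hT.le (by linarith)
      _ ≤ _ := integral_rpow_le_weighted_sum γ hT hTw.le hw1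
  · calc _ ≤ ∫ t in T..1, t ^ (γ - 2) := weighted_sum_le_integral_rpow γ hT hTw.le hw1
      _ ≤ max 1 (γ - 2 + 1) / (γ - 2 + 1) * (1 - T) :=
        integral_rpow_le_mul_one_sub (by linarith) hT.le (by linarith)
      _ = max 1 (γ - 1) / (γ - 1) * (1 - T) := by ring_nf
end

section
/- Let 0 < w ≤ 1 and 0 < T < w. Then the quantity (1/w²)·log(w/T) + (1/w²)·(1−w) is comparable (with absolute constants) to (1−T)·(1/w²)·(1 + log(w/T)), uniformly in 0 < T < w ≤ 1. -/
/-! With `L = log (w / T) ≥ 0`, the common factor `1 / w²` cancels and it suffices to compare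
`L + (1 - w)` with `(1 - T) (1 + L)`. The elementary bounds `1 - T / w ≤ L ≤ w / T - 1` give
`w - T ≤ L`, so `1 - T = (1 - w) + (w - T) ≤ (1 - w) + L`, and `L ≤ 2 (1 - T) (1 + L)`, splitting at
`T = 1 / 2`: for small `T` the factor `1 - T` is at least `1 / 2`, for large `T` one has
`L ≤ (1 - T) / T ≤ 2 (1 - T)`. -/

open Real

namespace Real

lemma sub_le_log_div {T w : ℝ} (hT : 0 < T) (hTw : T ≤ w) (hw : w ≤ 1) :
    w - T ≤ log (w / T) := by
  have hw₀ : 0 < w := hT.trans_le hTw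
  have hL : 0 ≤ log (w / T) := log_nonneg ((one_le_div hT).2 hTw)
  have h : 1 - (w / T)⁻¹ ≤ log (w / T) := one_sub_inv_le_log_of_pos (by positivity)
  rw [inv_div] at h
  calc w - T = w * (1 - T / w) := by field_simp
    _ ≤ w * log (w / T) := by gcongr
    _ ≤ log (w / T) := mul_le_of_le_one_left hL hw

lemma log_div_le_two_mul_one_sub_mul {T w : ℝ} (hT : 0 < T) (hTw : T ≤ w) (hw : w ≤ 1) :
    log (w / T) ≤ 2 * ((1 - T) * (1 + log (w / T))) := by
  have hL : 0 ≤ log (w / T) := log_nonneg ((one_le_div hT).2 hTw)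
  rcases le_or_gt T (1 / 2) with hsmall | hlarge
  · nlinarith
  · have hw₀ : 0 < w := hT.trans_le hTw
    have h : log (w / T) ≤ w / T - 1 := log_le_sub_one_of_pos (by positivity)
    have h' : log (w / T) * T ≤ 1 - T := by
      rw [div_sub_one hT.ne', le_div_iff₀ hT] at h
      linarith
    nlinarith

lemma one_sub_mul_one_add_log_div_le {T w : ℝ} (hT : 0 < T) (hTw : T ≤ w) (hw : w ≤ 1) :
    (1 - T) * (1 + log (w / T)) ≤ 2 * (log (w / T) + (1 - w)) := by
  have hL : 0 ≤ log (w / T) := log_nonneg ((one_le_div hT).2 hTw)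
  nlinarith [sub_le_log_div hT hTw hw, mul_nonneg hT.le hL]

lemma log_div_add_one_sub_le {T w : ℝ} (hT : 0 < T) (hTw : T ≤ w) (hw : w ≤ 1) :
    log (w / T) + (1 - w) ≤ 3 * ((1 - T) * (1 + log (w / T))) := by
  have hL : 0 ≤ log (w / T) := log_nonneg ((one_le_div hT).2 hTw)
  nlinarith [log_div_le_two_mul_one_sub_mul hT hTw hw]

end Real

theorem stmt9 :
    ∃ c C : ℝ, 0 < c ∧ 0 < C ∧ ∀ T w : ℝ, 0 < T → T < w → w ≤ 1 →
      c * ((1 - T) * (1 / w ^ 2) * (1 + Real.log (w / T)))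
          ≤ (1 / w ^ 2) * Real.log (w / T) + (1 / w ^ 2) * (1 - w) ∧
      (1 / w ^ 2) * Real.log (w / T) + (1 / w ^ 2) * (1 - w)
          ≤ C * ((1 - T) * (1 / w ^ 2) * (1 + Real.log (w / T))) := by
  refine ⟨1 / 2, 3, by norm_num, by norm_num, fun T w hT hTw hw => ⟨?_, ?_⟩⟩
  · linear_combination (1 / 2 * (1 / w ^ 2)) *
      one_sub_mul_one_add_log_div_le hT hTw.le hw
  · linear_combination (1 / w ^ 2) * log_div_add_one_sub_le hT hTw.le hw
end

section
/- Let γ < −1 be fixed. Then the quantity ((w−T)/w)·(T^{γ+1}/w²) + (w^{γ+1}/w²)·(1−w) is comparable, with constants depending only on γ, to (1−T)·T^{γ+1}/w², uniformly in 0 < T < w ≤ 1. -/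
/-! With `a = T^(γ+1)` and `b = w^(γ+1)`, both sides carry the factor `1 / w²`, and
`1 - T = (w - T) + (1 - w)`. Since `γ + 1 < 0` we have `b ≤ a`, which gives the upper bound.
For the lower bound, either `T ≤ w / 2`, and then `(w - T) / w ≥ 1 / 2` already dominates, or
`w ≤ 2T`, and then `a ≤ 2^(-(γ+1)) b`, so the term `(1 - w) a` is controlled by `(1 - w) b`. -/

open Real

theorem two_rpow_mul_rpow_le_rpow {β T w : ℝ} (hβ : β ≤ 0) (hT : 0 ≤ T) (hw : 0 < w)
    (h : w ≤ 2 * T) : 2 ^ β * T ^ β ≤ w ^ β := by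
  rw [← mul_rpow zero_le_two hT]
  exact rpow_le_rpow_of_nonpos hw h hβ

section

variable {a b T w : ℝ}

theorem sub_div_mul_add_mul_one_sub_le (hb : 0 ≤ b) (hba : b ≤ a) (hT : 0 < T) (hTw : T ≤ w)
    (hw : w ≤ 1) :
    (w - T) / w * a + b * (1 - w) ≤ 2 * ((1 - T) * a) := by
  have hw0 : 0 < w := hT.trans_le hTw
  have hratio : (w - T) / w ≤ 1 - T := by
    rw [div_le_iff₀ hw0]; nlinarith
  nlinarith [mul_le_mul_of_nonneg_right hratio (hb.trans hba),
    mul_le_mul_of_nonneg_right hba (sub_nonneg.2 hw)]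

theorem mul_le_sub_div_mul_add_mul_one_sub {k : ℝ} (hk1 : k ≤ 1) (ha : 0 ≤ a) (hb : 0 ≤ b)
    (hT : 0 ≤ T) (hTw : T < w) (hw : w ≤ 1) (hdoubling : w ≤ 2 * T → k * a ≤ b) :
    k / 2 * ((1 - T) * a) ≤ (w - T) / w * a + b * (1 - w) := by
  have hw0 : 0 < w := hT.trans_lt hTw
  rcases le_total (2 * T) w with hsmall | hlarge
  · have hhalf : 1 / 2 ≤ (w - T) / w := by
      rw [le_div_iff₀ hw0]; linarith
    nlinarith [mul_le_mul_of_nonneg_right hhalf ha, mul_nonneg hb (sub_nonneg.2 hw),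
      mul_le_mul_of_nonneg_right hk1 ha]
  · have hratio : w - T ≤ (w - T) / w := by
      rw [le_div_iff₀ hw0]; nlinarith
    nlinarith [mul_le_mul_of_nonneg_right hratio ha,
      mul_le_mul_of_nonneg_right (mul_le_mul_of_nonneg_right hk1 ha) (sub_nonneg.2 hTw.le),
      mul_le_mul_of_nonneg_right (hdoubling hlarge) (sub_nonneg.2 hw)]

end

theorem stmt10 (γ : ℝ) (hγ : γ < -1) :
    ∃ c C : ℝ, 0 < c ∧ 0 < C ∧ ∀ T w : ℝ, 0 < T → T < w → w ≤ 1 →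
      c * ((1 - T) * T ^ (γ + 1) / w ^ 2)
          ≤ (w - T) / w * (T ^ (γ + 1) / w ^ 2) + w ^ (γ + 1) / w ^ 2 * (1 - w) ∧
      (w - T) / w * (T ^ (γ + 1) / w ^ 2) + w ^ (γ + 1) / w ^ 2 * (1 - w)
          ≤ C * ((1 - T) * T ^ (γ + 1) / w ^ 2) := by
  have hβ : γ + 1 ≤ 0 := by linarith
  have hk0 : (0 : ℝ) < 2 ^ (γ + 1) := rpow_pos_of_pos two_pos _
  have hk1 : (2 : ℝ) ^ (γ + 1) ≤ 1 := rpow_le_one_of_one_le_of_nonpos one_le_two hβ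
  refine ⟨2 ^ (γ + 1) / 2, 2, by positivity, two_pos, fun T w hT hTw hw ↦ ?_⟩
  have hw0 : 0 < w := hT.trans hTw
  have hba : w ^ (γ + 1) ≤ T ^ (γ + 1) := rpow_le_rpow_of_nonpos hT hTw.le hβ
  have hsum : (w - T) / w * (T ^ (γ + 1) / w ^ 2) + w ^ (γ + 1) / w ^ 2 * (1 - w)
      = ((w - T) / w * T ^ (γ + 1) + w ^ (γ + 1) * (1 - w)) / w ^ 2 := by ring
  rw [hsum, ← mul_div_assoc, ← mul_div_assoc]
  exact ⟨div_le_div_of_nonneg_right (mul_le_sub_div_mul_add_mul_one_sub hk1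
      (rpow_pos_of_pos hT _).le (rpow_pos_of_pos hw0 _).le hT.le hTw hw
      (two_rpow_mul_rpow_le_rpow hβ hT.le hw0)) (sq_nonneg w),
    div_le_div_of_nonneg_right (sub_div_mul_add_mul_one_sub_le (rpow_pos_of_pos hw0 _).le hba
      hT hTw.le hw) (sq_nonneg w)⟩
end

section
/- Let α > −1. For small ε > 0, let f_ε = χ_{(0,ε)}. Then ‖f_ε‖_{L¹(dμ_{α,β})} ≍ ε^{2α+2} and ∫₀^ε log(2π/φ) dμ_{α,β}(φ) ≍ ε^{2α+2} log(2π/ε) as ε → 0⁺. Consequently the operator f ↦ ∫₀^π log(2π/(θ+φ)) f(φ) dμ_{α,β}(φ) is not bounded from L¹(dμ_{α,β}) to L^∞(0,π). -/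
/-!
Near `0` the Jacobi weight `sin (φ/2)^(2α+1) cos (φ/2)^(2β+1)` is comparable to `φ^(2α+1)`, so
both quantities reduce to `∫₀^ε φ^p dφ = ε^(p+1)/(p+1)` and `∫₀^ε φ^p log (2π/φ) dφ` with
`p = 2α+1 > -1`.
For the latter, `log (2π/φ) = log (2π/ε) + log (ε/φ)` and `log (ε/φ) ≤ (ε/φ)^s / s` with
`s = (p+1)/2` leave an integrable power of `φ`, costing only `O(ε^(p+1))`.

For unboundedness test the operator on `χ_(0,ε)`: for `θ, φ ∈ (0, ε)` the kernel is at least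
`log (π/ε)`, so the sup norm of the image is at least `log (π/ε)` times the `L¹` norm, and
`log (π/ε) → ∞`.
-/

open Real MeasureTheory Set
open scoped ENNReal

noncomputable def jacobiMeasure (α β : ℝ) : Measure ℝ :=
  (volume.restrict (Set.Ioo 0 π)).withDensity
    (fun φ => ENNReal.ofReal ((Real.sin (φ / 2)) ^ (2 * α + 1) * (Real.cos (φ / 2)) ^ (2 * β + 1)))

open Filter Topology

section PowerWeight

variable {p ε a : ℝ}

lemma integral_Ioo_rpow (hp : -1 < p) (hε : 0 < ε) :
    ∫ φ in Ioo 0 ε, φ ^ p = ε ^ (p + 1) / (p + 1) := by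
  rw [← integral_Ioc_eq_integral_Ioo, ← intervalIntegral.integral_of_le hε.le,
    integral_rpow (Or.inl hp), zero_rpow (by linarith : p + 1 ≠ 0)]
  ring

lemma rpow_mul_log_div_le {φ s : ℝ} (hφ : 0 < φ) (hε : 0 < ε) (ha : 0 < a) (hs : 0 < s) :
    φ ^ p * log (a / φ) ≤ log (a / ε) * φ ^ p + ε ^ s / s * φ ^ (p - s) := by
  have hsplit : log (a / φ) = log (a / ε) + log (ε / φ) := by
    rw [← log_mul (by positivity) (by positivity)]
    congr 1
    field_simp
  have hpow : φ ^ p * (ε / φ) ^ s = ε ^ s * φ ^ (p - s) := by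
    rw [div_rpow hε.le hφ.le, rpow_sub hφ]
    field_simp
  have hlog : log (ε / φ) ≤ (ε / φ) ^ s / s := log_le_rpow_div (by positivity) hs
  calc φ ^ p * log (a / φ) = log (a / ε) * φ ^ p + φ ^ p * log (ε / φ) := by rw [hsplit]; ring
    _ ≤ log (a / ε) * φ ^ p + φ ^ p * ((ε / φ) ^ s / s) := by gcongr
    _ = log (a / ε) * φ ^ p + ε ^ s / s * φ ^ (p - s) := by rw [mul_div_assoc', hpow]; ring

lemma log_div_le_log_div {φ : ℝ} (hφ : φ ∈ Ioo 0 ε) (ha : 0 < a) :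
    log (a / ε) ≤ log (a / φ) :=
  log_le_log (div_pos ha (hφ.1.trans hφ.2)) (div_le_div_of_nonneg_left ha.le hφ.1 hφ.2.le)

lemma log_div_nonneg_of_mem_Ioo {φ : ℝ} (hφ : φ ∈ Ioo 0 ε) (hεa : ε ≤ a) : 0 ≤ log (a / φ) :=
  log_nonneg ((one_le_div hφ.1).2 (hφ.2.le.trans hεa))

/-- The choice `s = (p + 1) / 2` in `rpow_mul_log_div_le` keeps `φ ^ (p - s)` integrable. -/
lemma integrableOn_rpow_mul_log_div_and_integral_le (hp : -1 < p) (hε : 0 < ε) (hεa : ε ≤ a) :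
    IntegrableOn (fun φ => φ ^ p * log (a / φ)) (Ioo 0 ε) ∧
      ∫ φ in Ioo 0 ε, φ ^ p * log (a / φ)
        ≤ ε ^ (p + 1) / (p + 1) * (log (a / ε) + 4 / (p + 1)) := by
  set s := (p + 1) / 2 with hs_def
  have hs : 0 < s := by linarith [hs_def]
  have hps : -1 < p - s := by linarith [hs_def]
  have ha : 0 < a := hε.trans_le hεa
  have hbound : IntegrableOn (fun φ => log (a / ε) * φ ^ p + ε ^ s / s * φ ^ (p - s)) (Ioo 0 ε) :=
    ((intervalIntegral.integrableOn_Ioo_rpow_iff hε).2 hp |>.const_mul _).add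
      ((intervalIntegral.integrableOn_Ioo_rpow_iff hε).2 hps |>.const_mul _)
  have hle : ∀ φ ∈ Ioo 0 ε, φ ^ p * log (a / φ) ≤ log (a / ε) * φ ^ p + ε ^ s / s * φ ^ (p - s) :=
    fun φ hφ => rpow_mul_log_div_le hφ.1 hε ha hs
  have hint : IntegrableOn (fun φ => φ ^ p * log (a / φ)) (Ioo 0 ε) := by
    refine hbound.mono' ((measurable_id.pow_const p).mul
      (measurable_log.comp (measurable_const.div measurable_id))).aestronglyMeasurable ?_
    filter_upwards [ae_restrict_mem measurableSet_Ioo] with φ hφ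
    rw [norm_of_nonneg (mul_nonneg (rpow_nonneg hφ.1.le p) (log_div_nonneg_of_mem_Ioo hφ hεa))]
    exact hle φ hφ
  refine ⟨hint, (setIntegral_mono_on hint hbound measurableSet_Ioo hle).trans_eq ?_⟩
  rw [integral_add ((intervalIntegral.integrableOn_Ioo_rpow_iff hε).2 hp |>.const_mul _)
      ((intervalIntegral.integrableOn_Ioo_rpow_iff hε).2 hps |>.const_mul _),
    integral_const_mul, integral_const_mul, integral_Ioo_rpow hp hε, integral_Ioo_rpow hps hε,
    show p - s + 1 = s by ring, div_mul_div_comm, ← rpow_add hε, show s + s = p + 1 by ring,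
    hs_def]
  have hp1 : p + 1 ≠ 0 := by linarith
  field_simp
  ring

lemma integral_rpow_mul_log_div_ge (hp : -1 < p) (hε : 0 < ε) (ha : 0 < a)
    (hint : IntegrableOn (fun φ => φ ^ p * log (a / φ)) (Ioo 0 ε)) :
    ε ^ (p + 1) / (p + 1) * log (a / ε) ≤ ∫ φ in Ioo 0 ε, φ ^ p * log (a / φ) := by
  rw [← integral_Ioo_rpow hp hε, ← integral_mul_const]
  exact setIntegral_mono_on (((intervalIntegral.integrableOn_Ioo_rpow_iff hε).2 hp).mul_const _)
    hint measurableSet_Ioo fun φ hφ =>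
      mul_le_mul_of_nonneg_left (log_div_le_log_div hφ ha) (rpow_nonneg hφ.1.le p)

end PowerWeight

lemma setIntegral_mul_bounds_of_comparable {X : Type*} [MeasurableSpace X] {μ : Measure X}
    {s : Set X} (hs : MeasurableSet s) {w h g : X → ℝ} {c C : ℝ} (hc : 0 ≤ c)
    (hwg : AEStronglyMeasurable (fun x => w x * g x) (μ.restrict s))
    (hhg : IntegrableOn (fun x => h x * g x) s μ) (hh : ∀ x ∈ s, 0 ≤ h x) (hg : ∀ x ∈ s, 0 ≤ g x)
    (hw : ∀ x ∈ s, c * h x ≤ w x ∧ w x ≤ C * h x) :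
    c * ∫ x in s, h x * g x ∂μ ≤ ∫ x in s, w x * g x ∂μ ∧
      ∫ x in s, w x * g x ∂μ ≤ C * ∫ x in s, h x * g x ∂μ := by
  have hlow : ∀ x ∈ s, c * (h x * g x) ≤ w x * g x := fun x hx => by
    rw [← mul_assoc]; exact mul_le_mul_of_nonneg_right (hw x hx).1 (hg x hx)
  have hupp : ∀ x ∈ s, w x * g x ≤ C * (h x * g x) := fun x hx => by
    rw [← mul_assoc]; exact mul_le_mul_of_nonneg_right (hw x hx).2 (hg x hx)
  have hint : IntegrableOn (fun x => w x * g x) s μ := by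
    refine (hhg.const_mul C).mono' hwg ?_
    filter_upwards [ae_restrict_mem hs] with x hx
    have h0 : 0 ≤ w x * g x :=
      (mul_nonneg (mul_nonneg hc (hh x hx)) (hg x hx)).trans (by rw [mul_assoc]; exact hlow x hx)
    rw [norm_of_nonneg h0]
    exact hupp x hx
  rw [← integral_const_mul, ← integral_const_mul]
  exact ⟨setIntegral_mono_on (hhg.const_mul c) hint hs hlow,
    setIntegral_mono_on hint (hhg.const_mul C) hs hupp⟩

section Jacobi

variable {α β ε : ℝ}

noncomputable def jacobiWeight (α β φ : ℝ) : ℝ :=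
  sin (φ / 2) ^ (2 * α + 1) * cos (φ / 2) ^ (2 * β + 1)

lemma measurable_jacobiWeight (α β : ℝ) : Measurable (jacobiWeight α β) :=
  ((measurable_sin.comp (measurable_id.div_const 2)).pow_const _).mul
    ((measurable_cos.comp (measurable_id.div_const 2)).pow_const _)

lemma jacobiWeight_pos {φ : ℝ} (hφ : φ ∈ Ioo 0 π) : 0 < jacobiWeight α β φ := by
  have := pi_pos
  have hsin : 0 < sin (φ / 2) := sin_pos_of_pos_of_lt_pi (by linarith [hφ.1]) (by linarith [hφ.2])
  have hcos : 0 < cos (φ / 2) := cos_pos_of_mem_Ioo ⟨by linarith [hφ.1], by linarith [hφ.2]⟩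
  unfold jacobiWeight
  positivity

lemma exists_rpow_bounds_on_Icc {a b : ℝ} (ha : 0 < a) (hab : a ≤ b) (p : ℝ) :
    ∃ m M : ℝ, 0 < m ∧ 0 < M ∧ ∀ x ∈ Icc a b, m ≤ x ^ p ∧ x ^ p ≤ M := by
  have hb : 0 < b := ha.trans_le hab
  refine ⟨min (a ^ p) (b ^ p), max (a ^ p) (b ^ p), lt_min (by positivity) (by positivity),
    lt_max_of_lt_left (by positivity), fun x hx => ?_⟩
  have hx0 : 0 < x := ha.trans_le hx.1
  rcases le_total 0 p with hp | hp
  · exact ⟨min_le_of_left_le (rpow_le_rpow ha.le hx.1 hp),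
      le_max_of_le_right (rpow_le_rpow hx0.le hx.2 hp)⟩
  · exact ⟨min_le_of_right_le (rpow_le_rpow_of_nonpos hx0 hx.2 hp),
      le_max_of_le_left (rpow_le_rpow_of_nonpos ha hx.1 hp)⟩

/-- Near `0`, `sin (φ / 2) / φ ∈ [1 / π, 1 / 2]` and `cos (φ / 2) ∈ [cos (1 / 2), 1]`. -/
lemma jacobiWeight_comparable_rpow (α β : ℝ) :
    ∃ c C : ℝ, 0 < c ∧ 0 < C ∧ ∀ φ ∈ Ioo 0 1,
      c * φ ^ (2 * α + 1) ≤ jacobiWeight α β φ ∧ jacobiWeight α β φ ≤ C * φ ^ (2 * α + 1) := by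
  have hπ := pi_gt_three
  have hcos_half : 0 < cos (1 / 2) := cos_pos_of_mem_Ioo ⟨by linarith, by linarith⟩
  obtain ⟨m₁, M₁, hm₁, hM₁, hsin⟩ :=
    exists_rpow_bounds_on_Icc (a := π⁻¹) (b := 2⁻¹) (by positivity)
      (inv_anti₀ two_pos (by linarith)) (2 * α + 1)
  obtain ⟨m₂, M₂, hm₂, hM₂, hcos⟩ :=
    exists_rpow_bounds_on_Icc hcos_half (cos_le_one _) (2 * β + 1)
  refine ⟨m₁ * m₂, M₁ * M₂, by positivity, by positivity, fun φ hφ => ?_⟩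
  obtain ⟨hφ0, hφ1⟩ := hφ
  have hsin_lb : π⁻¹ ≤ sin (φ / 2) / φ := by
    rw [le_div_iff₀ hφ0]
    calc π⁻¹ * φ = 2 / π * (φ / 2) := by field_simp
      _ ≤ sin (φ / 2) := mul_le_sin (by linarith) (by linarith)
  have hsin_ub : sin (φ / 2) / φ ≤ 2⁻¹ := by
    rw [div_le_iff₀ hφ0]
    linarith [sin_le (by linarith : (0 : ℝ) ≤ φ / 2)]
  have hcos_lb : cos (1 / 2) ≤ cos (φ / 2) :=
    cos_le_cos_of_nonneg_of_le_pi (by linarith) (by linarith) (by linarith)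
  obtain ⟨h₁, h₂⟩ := hsin _ ⟨hsin_lb, hsin_ub⟩
  obtain ⟨h₃, h₄⟩ := hcos _ ⟨hcos_lb, cos_le_one _⟩
  have hfactor : jacobiWeight α β φ =
      (sin (φ / 2) / φ) ^ (2 * α + 1) * cos (φ / 2) ^ (2 * β + 1) * φ ^ (2 * α + 1) := by
    rw [jacobiWeight, div_rpow (sin_nonneg_of_nonneg_of_le_pi (by linarith) (by linarith)) hφ0.le]
    field_simp
  have hφp : 0 < φ ^ (2 * α + 1) := by positivity
  rw [hfactor]
  exact ⟨mul_le_mul_of_nonneg_right (mul_le_mul h₁ h₃ hm₂.le (hm₁.le.trans h₁)) hφp.le,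
    mul_le_mul_of_nonneg_right (mul_le_mul h₂ h₄ (hm₂.le.trans h₃) hM₁.le) hφp.le⟩

lemma jacobiMeasure_eq_withDensity (α β : ℝ) :
    jacobiMeasure α β =
      (volume.restrict (Ioo 0 π)).withDensity fun φ => ENNReal.ofReal (jacobiWeight α β φ) :=
  rfl

lemma setIntegral_jacobiMeasure (hε : ε ≤ π) (g : ℝ → ℝ) :
    ∫ φ in Ioo 0 ε, g φ ∂jacobiMeasure α β = ∫ φ in Ioo 0 ε, jacobiWeight α β φ * g φ := by
  rw [jacobiMeasure_eq_withDensity, setIntegral_withDensity_eq_setIntegral_toReal_smul' _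
      (measurable_jacobiWeight α β).ennreal_ofReal (ae_of_all _ fun _ => ENNReal.ofReal_lt_top),
    Measure.restrict_restrict measurableSet_Ioo,
    inter_eq_self_of_subset_left (Ioo_subset_Ioo_right hε)]
  refine setIntegral_congr_fun measurableSet_Ioo fun φ hφ => ?_
  rw [smul_eq_mul, ENNReal.toReal_ofReal
    (jacobiWeight_pos ⟨hφ.1, hφ.2.trans_le hε⟩).le]

lemma jacobiMeasure_real_Ioo (hε : ε ≤ π) :
    (jacobiMeasure α β).real (Ioo 0 ε) = ∫ φ in Ioo 0 ε, jacobiWeight α β φ := by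
  simpa using setIntegral_jacobiMeasure (α := α) (β := β) hε (fun _ => 1)

theorem jacobiMeasure_Ioo_asymptotics (hα : -1 < α) :
    ∃ c C : ℝ, 0 < c ∧ 0 < C ∧ ∀ ε ∈ Ioo (0 : ℝ) 1,
      (c * ε ^ (2 * α + 2) ≤ (jacobiMeasure α β).real (Ioo 0 ε) ∧
        (jacobiMeasure α β).real (Ioo 0 ε) ≤ C * ε ^ (2 * α + 2)) ∧
      (c * (ε ^ (2 * α + 2) * log (2 * π / ε))
          ≤ ∫ φ in Ioo 0 ε, log (2 * π / φ) ∂jacobiMeasure α β ∧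
        ∫ φ in Ioo 0 ε, log (2 * π / φ) ∂jacobiMeasure α β
          ≤ C * (ε ^ (2 * α + 2) * log (2 * π / ε))) := by
  obtain ⟨c, C, hc, hC, hw⟩ := jacobiWeight_comparable_rpow α β
  have hp : -1 < 2 * α + 1 := by linarith
  have hq : 0 < 2 * α + 2 := by linarith
  have hpq : 2 * α + 1 + 1 = 2 * α + 2 := by ring
  refine ⟨c / (2 * α + 2), C / (2 * α + 2) * (1 + 4 / (2 * α + 2)), by positivity, by positivity,
    fun ε hε => ?_⟩
  have hπ := pi_gt_three
  have hε0 := hε.1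
  have hεπ : ε ≤ π := by linarith [hε.2]
  have hw' : ∀ φ ∈ Ioo 0 ε, c * φ ^ (2 * α + 1) ≤ jacobiWeight α β φ ∧
      jacobiWeight α β φ ≤ C * φ ^ (2 * α + 1) := fun φ hφ => hw φ ⟨hφ.1, hφ.2.trans hε.2⟩
  have hpow_nonneg : ∀ φ ∈ Ioo (0 : ℝ) ε, 0 ≤ φ ^ (2 * α + 1) := fun φ hφ => rpow_nonneg hφ.1.le _
  have hlog_one : 1 ≤ log (2 * π / ε) := by
    rw [le_log_iff_exp_le (by positivity), le_div_iff₀ hε0]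
    nlinarith [exp_one_lt_d9, hε.2]
  obtain ⟨hint, hupper⟩ :=
    integrableOn_rpow_mul_log_div_and_integral_le hp hε0 (a := 2 * π) (by linarith)
  have hlower := integral_rpow_mul_log_div_ge hp hε0 (by positivity) hint
  obtain ⟨hmass_lo, hmass_hi⟩ := setIntegral_mul_bounds_of_comparable (g := fun _ => 1)
    measurableSet_Ioo hc.le ((measurable_jacobiWeight α β).aestronglyMeasurable.mul_const 1)
    (((intervalIntegral.integrableOn_Ioo_rpow_iff hε0).2 hp).mul_const 1)
    hpow_nonneg (fun _ _ => zero_le_one) hw'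
  obtain ⟨hlog_lo, hlog_hi⟩ := setIntegral_mul_bounds_of_comparable
    (g := fun φ => log (2 * π / φ)) measurableSet_Ioo hc.le
    ((measurable_jacobiWeight α β).mul
      (measurable_log.comp (measurable_const.div measurable_id))).aestronglyMeasurable
    hint hpow_nonneg (fun φ hφ => log_div_nonneg_of_mem_Ioo hφ (by linarith)) hw'
  simp only [mul_one] at hmass_lo hmass_hi
  rw [integral_Ioo_rpow hp hε0, hpq] at hmass_lo hmass_hi
  rw [hpq] at hupper hlower
  rw [jacobiMeasure_real_Ioo hεπ, setIntegral_jacobiMeasure hεπ]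
  set E := ε ^ (2 * α + 2)
  set L := log (2 * π / ε)
  have hE_le : E / (2 * α + 2) ≤ E / (2 * α + 2) * (1 + 4 / (2 * α + 2)) :=
    le_mul_of_one_le_right (by positivity) (by linarith [div_pos four_pos hq])
  have hL_le : E / (2 * α + 2) * (L + 4 / (2 * α + 2))
      ≤ E / (2 * α + 2) * (1 + 4 / (2 * α + 2)) * L := by
    rw [mul_assoc]
    gcongr
    nlinarith [div_pos four_pos hq]
  refine ⟨⟨?_, ?_⟩, ?_, ?_⟩
  · calc c / (2 * α + 2) * E = c * (E / (2 * α + 2)) := by ring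
      _ ≤ _ := hmass_lo
  · calc _ ≤ C * (E / (2 * α + 2)) := hmass_hi
      _ ≤ C * (E / (2 * α + 2) * (1 + 4 / (2 * α + 2))) := by gcongr
      _ = _ := by ring
  · calc c / (2 * α + 2) * (E * L) = c * (E / (2 * α + 2) * L) := by ring
      _ ≤ _ := by gcongr
      _ ≤ _ := hlog_lo
  · calc _ ≤ _ := hlog_hi
      _ ≤ C * (E / (2 * α + 2) * (1 + 4 / (2 * α + 2)) * L) := by gcongr; exact hupper.trans hL_le
      _ = _ := by ring

end Jacobi

section LogKernel

variable {μ : Measure ℝ} {ε θ : ℝ}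

lemma ae_norm_le_of_eLpNorm_top_le {X E : Type*} [MeasurableSpace X] [NormedAddCommGroup E]
    {μ : Measure X} {f : X → E} {B : ℝ} (hB : 0 ≤ B) (hf : eLpNorm f ⊤ μ ≤ ENNReal.ofReal B) :
    ∀ᵐ x ∂μ, ‖f x‖ ≤ B := by
  filter_upwards [ae_le_eLpNormEssSup (f := f) (μ := μ)] with x hx
  rw [← eLpNorm_exponent_top, ← ofReal_norm] at hx
  exact (ENNReal.ofReal_le_ofReal_iff hB).1 (hx.trans hf)

lemma log_div_mul_le_integral_logKernel_indicator (hεπ : ε ≤ π) (hθ : θ ∈ Ioo 0 ε)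
    (hfin : μ (Ioo 0 ε) ≠ ⊤) :
    log (π / ε) * μ.real (Ioo 0 ε) ≤
      ∫ φ, log (2 * π / (θ + φ)) * (Ioo 0 ε).indicator 1 φ ∂μ := by
  have hε : 0 < ε := hθ.1.trans hθ.2
  have hkernel : ∀ φ ∈ Ioo 0 ε,
      log (π / ε) ≤ log (2 * π / (θ + φ)) ∧ log (2 * π / (θ + φ)) ≤ log (2 * π / θ) := by
    intro φ hφ
    have hsum : 0 < θ + φ := by linarith [hθ.1, hφ.1]
    refine ⟨log_le_log (by positivity) ?_, log_le_log (by positivity) ?_⟩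
    · rw [div_le_div_iff₀ hε hsum]
      nlinarith [hθ.2, hφ.2, pi_pos]
    · exact div_le_div_of_nonneg_left (by positivity) hθ.1 (by linarith [hφ.1])
  have hlog_nonneg : 0 ≤ log (π / ε) := log_nonneg ((one_le_div hε).2 hεπ)
  have hint : IntegrableOn (fun φ => log (2 * π / (θ + φ))) (Ioo 0 ε) μ := by
    refine Measure.integrableOn_of_bounded hfin (measurable_log.comp
      (measurable_const.div (measurable_const.add measurable_id))).aestronglyMeasurable
      (M := log (2 * π / θ)) ?_
    filter_upwards [ae_restrict_mem measurableSet_Ioo] with φ hφ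
    rw [norm_of_nonneg (hlog_nonneg.trans (hkernel φ hφ).1)]
    exact (hkernel φ hφ).2
  have hrw : (fun φ => log (2 * π / (θ + φ)) * (Ioo 0 ε).indicator 1 φ) =
      (Ioo 0 ε).indicator fun φ => log (2 * π / (θ + φ)) := by
    ext φ
    by_cases hφ : φ ∈ Ioo 0 ε <;> simp [hφ]
  rw [hrw, integral_indicator measurableSet_Ioo]
  exact setIntegral_ge_of_const_le_real measurableSet_Ioo hfin (fun φ hφ => (hkernel φ hφ).1) hint

theorem not_exists_logKernel_L1_Linfty_bound
    (hμ : ∀ᶠ ε in 𝓝[>] 0, 0 < μ.real (Ioo 0 ε)) :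
    ¬ ∃ C : ℝ, 0 < C ∧ ∀ f : ℝ → ℝ, Integrable f μ →
      eLpNorm (fun θ => ∫ φ, log (2 * π / (θ + φ)) * f φ ∂μ) ⊤ μ
        ≤ ENNReal.ofReal (C * ∫ φ, |f φ| ∂μ) := by
  rintro ⟨C, hC, hbound⟩
  have hlog : Tendsto (fun ε => log (π / ε)) (𝓝[>] 0) atTop := by
    simp only [div_eq_mul_inv]
    exact tendsto_log_atTop.comp (tendsto_inv_nhdsGT_zero.const_mul_atTop pi_pos)
  obtain ⟨ε, hM, hεC, hε⟩ := (hμ.and ((hlog.eventually_gt_atTop C).and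
    (Ioo_mem_nhdsGT pi_pos))).exists
  set s := Ioo (0 : ℝ) ε
  obtain ⟨hs0, hsfin⟩ := ENNReal.toReal_pos_iff.1 hM
  have hf : Integrable (s.indicator 1) μ :=
    (integrable_indicator_iff measurableSet_Ioo).2 (integrableOn_const (C := (1 : ℝ)) hsfin.ne)
  have hf_abs : ∫ φ, |s.indicator (1 : ℝ → ℝ) φ| ∂μ = μ.real s := by
    rw [← integral_indicator_one measurableSet_Ioo]
    congr 1 with φ
    simp only [indicator_apply]
    split_ifs <;> simp
  have hae := ae_norm_le_of_eLpNorm_top_le (by positivity) (hf_abs ▸ hbound _ hf)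
  have : (ae (μ.restrict s)).NeBot := ae_restrict_neBot.2 hs0.ne'
  obtain ⟨θ, hθ, hθC⟩ := ((ae_restrict_mem (μ := μ) (measurableSet_Ioo (a := 0) (b := ε))).and
    (ae_restrict_of_ae hae)).exists
  have hlow := log_div_mul_le_integral_logKernel_indicator hε.2.le hθ hsfin.ne
  have hgap : C * μ.real s < log (π / ε) * μ.real s := mul_lt_mul_of_pos_right hεC hM
  have hupp := (le_abs_self _).trans ((Real.norm_eq_abs _).symm.trans_le hθC)
  exact (hgap.trans_le (hlow.trans hupp)).false

end LogKernel

theorem stmt12_general (α β : ℝ) (hα : -1 < α) :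
    (∃ c C ε₀ : ℝ, 0 < c ∧ 0 < C ∧ 0 < ε₀ ∧ ∀ ε : ℝ, 0 < ε → ε < ε₀ →
      (c * ε ^ (2 * α + 2) ≤ ((jacobiMeasure α β) (Set.Ioo 0 ε)).toReal ∧
        ((jacobiMeasure α β) (Set.Ioo 0 ε)).toReal ≤ C * ε ^ (2 * α + 2)) ∧
      (c * (ε ^ (2 * α + 2) * Real.log (2 * π / ε))
          ≤ (∫ φ in Set.Ioo (0 : ℝ) ε, Real.log (2 * π / φ) ∂(jacobiMeasure α β)) ∧
        (∫ φ in Set.Ioo (0 : ℝ) ε, Real.log (2 * π / φ) ∂(jacobiMeasure α β))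
          ≤ C * (ε ^ (2 * α + 2) * Real.log (2 * π / ε)))) ∧
    ¬ ∃ C : ℝ, 0 < C ∧ ∀ f : ℝ → ℝ, Integrable f (jacobiMeasure α β) →
      eLpNorm (fun θ => ∫ φ, Real.log (2 * π / (θ + φ)) * f φ ∂(jacobiMeasure α β)) ⊤
          (jacobiMeasure α β)
        ≤ ENNReal.ofReal (C * ∫ φ, |f φ| ∂(jacobiMeasure α β)) := by
  obtain ⟨c, C, hc, hC, hasymp⟩ := jacobiMeasure_Ioo_asymptotics (β := β) hα
  refine ⟨⟨c, C, 1, hc, hC, one_pos, fun ε hε₀ hε₁ => hasymp ε ⟨hε₀, hε₁⟩⟩,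
    not_exists_logKernel_L1_Linfty_bound ?_⟩
  filter_upwards [Ioo_mem_nhdsGT one_pos] with ε hε
  exact (mul_pos hc (rpow_pos_of_pos hε.1 _)).trans_le (hasymp ε hε).1.1

theorem stmt12 (α β : ℝ) (hα : -1 < α) (hβ : -1 < β) :
    (∃ c C ε₀ : ℝ, 0 < c ∧ 0 < C ∧ 0 < ε₀ ∧ ∀ ε : ℝ, 0 < ε → ε < ε₀ →
      (c * ε ^ (2 * α + 2) ≤ ((jacobiMeasure α β) (Set.Ioo 0 ε)).toReal ∧
        ((jacobiMeasure α β) (Set.Ioo 0 ε)).toReal ≤ C * ε ^ (2 * α + 2)) ∧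
      (c * (ε ^ (2 * α + 2) * Real.log (2 * π / ε))
          ≤ (∫ φ in Set.Ioo (0 : ℝ) ε, Real.log (2 * π / φ) ∂(jacobiMeasure α β)) ∧
        (∫ φ in Set.Ioo (0 : ℝ) ε, Real.log (2 * π / φ) ∂(jacobiMeasure α β))
          ≤ C * (ε ^ (2 * α + 2) * Real.log (2 * π / ε)))) ∧
    ¬ ∃ C : ℝ, 0 < C ∧ ∀ f : ℝ → ℝ, Integrable f (jacobiMeasure α β) →
      eLpNorm (fun θ => ∫ φ, Real.log (2 * π / (θ + φ)) * f φ ∂(jacobiMeasure α β)) ⊤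
          (jacobiMeasure α β)
        ≤ ENNReal.ofReal (C * ∫ φ, |f φ| ∂(jacobiMeasure α β)) :=
  stmt12_general α β hα
end

section
/- Let α, β ≥ −1/2 and set δ = max(α+1, β+1, 1/2). Then for every ball B(θ, r) in (0, π) with radius 0 < r < π, centered at θ ∈ (0, π), one has μ_{α,β}(B(θ,r)) ≥ c·r^{2δ} for a constant c > 0 depending only on α and β, where μ_{α,β} is the Jacobi measure with density (sin(θ/2))^{2α+1}(cos(θ/2))^{2β+1}. In fact μ_{α,β}(B(θ,r)) ≍ r·(r+θ)^{2α+1}·(r+π−θ)^{2β+1}. -/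
open Real MeasureTheory Set
open scoped ENNReal

/-!
With `a = 2α + 1 ≥ 0` and `b = 2β + 1 ≥ 0`, Jordan's inequality `φ / π ≤ sin (φ / 2) ≤ φ / 2`,
applied at `φ` and at `π - φ`, compares the density with `φ ^ a * (π - φ) ^ b`. On `B(θ, r)` this
is at most `(r + θ) ^ a * (r + π - θ) ^ b`, and the ball contains an interval of length `r / 4` on
which `φ` and `π - φ` are at least `(r + θ) / 8` and `(r + π - θ) / 8`; this gives
`μ(B(θ, r)) ≍ r (r + θ) ^ a (r + π - θ) ^ b`. Since `r + θ` and `r + π - θ` are both at least `r`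
and one of them is at least `π / 2`, the right-hand side is `≳ r ^ (1 + max a b) = r ^ (2δ)`.
-/

lemma rpow_mul_rpow_le_rpow_mul_rpow {a b x y x' y' : ℝ} (ha : 0 ≤ a) (hb : 0 ≤ b) (hx : 0 ≤ x)
    (hy : 0 ≤ y) (hxx' : x ≤ x') (hyy' : y ≤ y') : x ^ a * y ^ b ≤ x' ^ a * y' ^ b :=
  mul_le_mul (rpow_le_rpow hx hxx' ha) (rpow_le_rpow hy hyy' hb) (rpow_nonneg hy b)
    (rpow_nonneg (hx.trans hxx') a)

lemma div_pi_le_sin_half {φ : ℝ} (h0 : 0 ≤ φ) (hπ : φ ≤ π) : φ / π ≤ sin (φ / 2) :=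
  calc φ / π = 2 / π * (φ / 2) := by field_simp
    _ ≤ sin (φ / 2) := mul_le_sin (by linarith) (by linarith)

lemma cos_half_eq_sin_half_pi_sub (φ : ℝ) : cos (φ / 2) = sin ((π - φ) / 2) := by
  rw [show (π - φ) / 2 = π / 2 - φ / 2 by ring, sin_pi_div_two_sub]

lemma sin_half_rpow_mul_cos_half_rpow_le {a b φ : ℝ} (ha : 0 ≤ a) (hb : 0 ≤ b) (h0 : 0 ≤ φ)
    (hπ : φ ≤ π) :
    sin (φ / 2) ^ a * cos (φ / 2) ^ b ≤ (φ / 2) ^ a * ((π - φ) / 2) ^ b := by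
  rw [cos_half_eq_sin_half_pi_sub]
  exact rpow_mul_rpow_le_rpow_mul_rpow ha hb
    (sin_nonneg_of_nonneg_of_le_pi (by linarith) (by linarith))
    (sin_nonneg_of_nonneg_of_le_pi (by linarith) (by linarith))
    (sin_le (by linarith)) (sin_le (by linarith))

lemma div_pi_rpow_mul_le_sin_half_rpow_mul_cos_half_rpow {a b φ : ℝ} (ha : 0 ≤ a) (hb : 0 ≤ b)
    (h0 : 0 ≤ φ) (hπ : φ ≤ π) :
    (φ / π) ^ a * ((π - φ) / π) ^ b ≤ sin (φ / 2) ^ a * cos (φ / 2) ^ b := by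
  rw [cos_half_eq_sin_half_pi_sub]
  exact rpow_mul_rpow_le_rpow_mul_rpow ha hb (by positivity) (div_nonneg (by linarith) pi_pos.le)
    (div_pi_le_sin_half h0 hπ) (div_pi_le_sin_half (by linarith) (by linarith))

lemma exists_Ioo_subset_Ioo_far_from_ends {L θ r : ℝ} (hθ0 : 0 < θ) (hθL : θ < L) (hr : 0 < r)
    (hrL : r < L) :
    ∃ m, ∀ φ ∈ Ioo (m - r / 8) (m + r / 8),
      φ ∈ Ioo (θ - r) (θ + r) ∧ (r + θ) / 8 ≤ φ ∧ (r + L - θ) / 8 ≤ L - φ := by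
  set l := max (θ - r) 0
  set u := min (θ + r) L
  have hl : θ - r ≤ l ∧ 0 ≤ l := ⟨le_max_left _ _, le_max_right _ _⟩
  have hu : u ≤ θ + r ∧ u ≤ L := ⟨min_le_left _ _, min_le_right _ _⟩
  have hθu : θ ≤ u := le_min (by linarith) hθL.le
  have hru : r ≤ u := le_min (by linarith) hrL.le
  have hlu : l + r ≤ u := by
    have : l ≤ u - r := max_le (by linarith) (by linarith)
    linarith
  refine ⟨(l + u) / 2, fun φ ⟨h1, h2⟩ => ⟨⟨by linarith, by linarith⟩, ?_, ?_⟩⟩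
  · rcases le_total θ (2 * r) with h | h <;> linarith
  · rcases le_total (L - θ) (2 * r) with h | h <;> linarith

lemma rpow_max_le_two_rpow_mul_rpow_mul_rpow {a b t x y : ℝ} (ha : 0 ≤ a) (hb : 0 ≤ b)
    (ht0 : 0 < t) (ht1 : t ≤ 1) (hx : t ≤ x) (hy : t ≤ y) (hxy : 1 ≤ x + y) :
    t ^ max a b ≤ 2 ^ (a + b) * (x ^ a * y ^ b) := by
  wlog h : 1 / 2 ≤ x generalizing a b x y
  · have := this hb ha hy hx (by linarith) (by linarith)
    rwa [max_comm, add_comm, mul_comm (y ^ b)] at this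
  calc t ^ max a b ≤ t ^ b := rpow_le_rpow_of_exponent_ge ht0 ht1 (le_max_right a b)
    _ ≤ y ^ b := rpow_le_rpow ht0.le hy hb
    _ ≤ (2 * x) ^ a * y ^ b :=
        le_mul_of_one_le_left (rpow_nonneg (by linarith) b) (one_le_rpow (by linarith) ha)
    _ = 2 ^ a * (x ^ a * y ^ b) := by rw [mul_rpow zero_le_two (by linarith)]; ring
    _ ≤ 2 ^ (a + b) * (x ^ a * y ^ b) :=
        mul_le_mul_of_nonneg_right (rpow_le_rpow_of_exponent_le one_le_two (by linarith))
          (mul_nonneg (rpow_nonneg (by linarith) a) (rpow_nonneg (by linarith) b))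

lemma exists_pos_mul_rpow_max_le {a b : ℝ} (ha : 0 ≤ a) (hb : 0 ≤ b) :
    ∃ K > 0, ∀ θ ∈ Ioo 0 π, ∀ r, 0 < r → r < π →
      K * r ^ max a b ≤ (r + θ) ^ a * (r + π - θ) ^ b := by
  refine ⟨π ^ a * π ^ b / (2 ^ (a + b) * π ^ max a b), by positivity, ?_⟩
  rintro θ ⟨hθ0, hθπ⟩ r hr hrπ
  have key := rpow_max_le_two_rpow_mul_rpow_mul_rpow ha hb (t := r / π) (x := (r + θ) / π)
    (y := (r + π - θ) / π) (by positivity) ((div_le_one pi_pos).2 hrπ.le)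
    (by gcongr; linarith) (by gcongr; linarith)
    (by rw [← add_div, one_le_div pi_pos]; linarith)
  rw [div_rpow hr.le pi_pos.le, div_rpow (by linarith) pi_pos.le,
    div_rpow (by linarith) pi_pos.le] at key
  calc π ^ a * π ^ b / (2 ^ (a + b) * π ^ max a b) * r ^ max a b
      = π ^ a * π ^ b / 2 ^ (a + b) * (r ^ max a b / π ^ max a b) := by ring
    _ ≤ π ^ a * π ^ b / 2 ^ (a + b) *
        (2 ^ (a + b) * ((r + θ) ^ a / π ^ a * ((r + π - θ) ^ b / π ^ b))) := by gcongr
    _ = (r + θ) ^ a * (r + π - θ) ^ b := by field_simp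

lemma two_mul_max_max_half {α β : ℝ} (hα : -1 / 2 ≤ α) :
    2 * max (max (α + 1) (β + 1)) (1 / 2) = 1 + max (2 * α + 1) (2 * β + 1) := by
  rw [max_eq_left (le_max_of_le_left (by linarith)), mul_max_of_nonneg _ _ zero_le_two,
    ← max_add_add_left]
  ring_nf

lemma jacobiMeasure_apply (α β : ℝ) {s : Set ℝ} (hs : MeasurableSet s) :
    jacobiMeasure α β s = ∫⁻ φ in s ∩ Ioo 0 π,
      ENNReal.ofReal (sin (φ / 2) ^ (2 * α + 1) * cos (φ / 2) ^ (2 * β + 1)) := by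
  rw [jacobiMeasure, withDensity_apply _ hs, Measure.restrict_restrict hs]

lemma jacobiMeasure_Ioo_le {α β θ r : ℝ} (hα : -1 / 2 ≤ α) (hβ : -1 / 2 ≤ β) (hr : 0 ≤ r) :
    jacobiMeasure α β (Ioo (θ - r) (θ + r)) ≤
      ENNReal.ofReal (2 * (r * (r + θ) ^ (2 * α + 1) * (r + π - θ) ^ (2 * β + 1))) := by
  set D := (r + θ) ^ (2 * α + 1) * (r + π - θ) ^ (2 * β + 1) with hD_def
  have hdensity_le : ∀ φ ∈ Ioo (θ - r) (θ + r) ∩ Ioo 0 π,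
      ENNReal.ofReal (sin (φ / 2) ^ (2 * α + 1) * cos (φ / 2) ^ (2 * β + 1)) ≤ ENNReal.ofReal D := by
    rintro φ ⟨⟨h1, h2⟩, h3, h4⟩
    apply ENNReal.ofReal_le_ofReal
    calc _ ≤ (φ / 2) ^ (2 * α + 1) * ((π - φ) / 2) ^ (2 * β + 1) :=
          sin_half_rpow_mul_cos_half_rpow_le (by linarith) (by linarith) h3.le h4.le
      _ ≤ D := rpow_mul_rpow_le_rpow_mul_rpow (by linarith) (by linarith) (by linarith)
          (by linarith) (by linarith) (by linarith)
  rw [jacobiMeasure_apply α β measurableSet_Ioo]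
  calc _ ≤ ∫⁻ _ in Ioo (θ - r) (θ + r) ∩ Ioo 0 π, ENNReal.ofReal D :=
        setLIntegral_mono measurable_const hdensity_le
    _ = ENNReal.ofReal D * volume (Ioo (θ - r) (θ + r) ∩ Ioo 0 π) := setLIntegral_const _ _
    _ ≤ ENNReal.ofReal D * volume (Ioo (θ - r) (θ + r)) := by gcongr; exact inter_subset_left
    _ = _ := by
        rw [Real.volume_Ioo, ← ENNReal.ofReal_mul' (by linarith), hD_def]
        ring_nf

lemma ofReal_le_jacobiMeasure_Ioo {α β θ r : ℝ} (hα : -1 / 2 ≤ α) (hβ : -1 / 2 ≤ β)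
    (hθ : θ ∈ Ioo 0 π) (hr : 0 < r) (hrπ : r < π) :
    ENNReal.ofReal ((4 * (8 * π) ^ (2 * α + 1) * (8 * π) ^ (2 * β + 1))⁻¹ *
        (r * (r + θ) ^ (2 * α + 1) * (r + π - θ) ^ (2 * β + 1))) ≤
      jacobiMeasure α β (Ioo (θ - r) (θ + r)) := by
  obtain ⟨hθ0, hθπ⟩ := hθ
  obtain ⟨m, hm⟩ := exists_Ioo_subset_Ioo_far_from_ends hθ0 hθπ hr hrπ
  set J := Ioo (m - r / 8) (m + r / 8)
  set d := ((r + θ) / (8 * π)) ^ (2 * α + 1) * ((r + π - θ) / (8 * π)) ^ (2 * β + 1) with hd_def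
  have hd : 0 ≤ d := mul_nonneg (rpow_nonneg (by positivity) _)
    (rpow_nonneg (div_nonneg (by linarith) (by positivity)) _)
  have hJ : J ⊆ Ioo (θ - r) (θ + r) ∩ Ioo 0 π := fun φ hφ => by
    obtain ⟨hB, h1, h2⟩ := hm φ hφ
    exact ⟨hB, by linarith, by linarith⟩
  have hle_density : ∀ φ ∈ J, ENNReal.ofReal d ≤
      ENNReal.ofReal (sin (φ / 2) ^ (2 * α + 1) * cos (φ / 2) ^ (2 * β + 1)) := by
    intro φ hφ
    obtain ⟨-, h1, h2⟩ := hm φ hφ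
    apply ENNReal.ofReal_le_ofReal
    calc d ≤ (φ / π) ^ (2 * α + 1) * ((π - φ) / π) ^ (2 * β + 1) := by
          rw [hd_def, ← div_div, ← div_div]
          exact rpow_mul_rpow_le_rpow_mul_rpow (by linarith) (by linarith)
            (div_nonneg (by linarith) pi_pos.le) (div_nonneg (by linarith) pi_pos.le)
            (by gcongr) (by gcongr)
      _ ≤ _ := div_pi_rpow_mul_le_sin_half_rpow_mul_cos_half_rpow (by linarith) (by linarith)
          (by linarith) (by linarith)
  rw [jacobiMeasure_apply α β measurableSet_Ioo]
  calc _ = ENNReal.ofReal d * volume J := by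
        rw [Real.volume_Ioo, ← ENNReal.ofReal_mul hd, hd_def, div_rpow (by linarith) (by positivity),
          div_rpow (by linarith) (by positivity)]
        congr 1
        field_simp
        ring
    _ = ∫⁻ _ in J, ENNReal.ofReal d := (setLIntegral_const _ _).symm
    _ ≤ ∫⁻ φ in J, ENNReal.ofReal (sin (φ / 2) ^ (2 * α + 1) * cos (φ / 2) ^ (2 * β + 1)) :=
        setLIntegral_mono (by fun_prop) hle_density
    _ ≤ _ := lintegral_mono_set hJ

theorem stmt15 (α β : ℝ) (hα : -1/2 ≤ α) (hβ : -1/2 ≤ β) :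
    ∃ c c' C' : ℝ, 0 < c ∧ 0 < c' ∧ 0 < C' ∧
      ∀ θ ∈ Set.Ioo (0 : ℝ) π, ∀ r : ℝ, 0 < r → r < π →
        c * r ^ (2 * max (max (α + 1) (β + 1)) (1/2))
            ≤ ((jacobiMeasure α β) (Set.Ioo (θ - r) (θ + r))).toReal ∧
        c' * (r * (r + θ) ^ (2 * α + 1) * (r + π - θ) ^ (2 * β + 1))
            ≤ ((jacobiMeasure α β) (Set.Ioo (θ - r) (θ + r))).toReal ∧
        ((jacobiMeasure α β) (Set.Ioo (θ - r) (θ + r))).toReal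
            ≤ C' * (r * (r + θ) ^ (2 * α + 1) * (r + π - θ) ^ (2 * β + 1)) := by
  obtain ⟨K, hK, hpow⟩ :=
    exists_pos_mul_rpow_max_le (a := 2 * α + 1) (b := 2 * β + 1) (by linarith) (by linarith)
  set c' := (4 * (8 * π) ^ (2 * α + 1) * (8 * π) ^ (2 * β + 1))⁻¹
  refine ⟨c' * K, c', 2, by positivity, by positivity, two_pos, ?_⟩
  rintro θ hθ r hr hrπ
  have hupper := jacobiMeasure_Ioo_le (θ := θ) hα hβ hr.le
  have hlower := (ENNReal.ofReal_le_iff_le_toReal (ne_top_of_le_ne_top ENNReal.ofReal_ne_top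
    hupper)).1 (ofReal_le_jacobiMeasure_Ioo hα hβ hθ hr hrπ)
  have hP : 0 ≤ 2 * (r * (r + θ) ^ (2 * α + 1) * (r + π - θ) ^ (2 * β + 1)) :=
    mul_nonneg zero_le_two (mul_nonneg (mul_nonneg hr.le (rpow_nonneg (by linarith [hθ.1]) _))
      (rpow_nonneg (by linarith [hθ.2]) _))
  refine ⟨?_, hlower, ENNReal.toReal_le_of_le_ofReal hP hupper⟩
  calc c' * K * r ^ (2 * max (max (α + 1) (β + 1)) (1 / 2))
      = c' * (r * (K * r ^ max (2 * α + 1) (2 * β + 1))) := by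
        rw [two_mul_max_max_half hα, rpow_add hr, rpow_one]; ring
    _ ≤ c' * (r * ((r + θ) ^ (2 * α + 1) * (r + π - θ) ^ (2 * β + 1))) := by
        gcongr c' * (r * ?_); exact hpow θ hθ r hr hrπ
    _ = c' * (r * (r + θ) ^ (2 * α + 1) * (r + π - θ) ^ (2 * β + 1)) := by ring
    _ ≤ _ := hlower
end

section
/- Let α, β > −1. Then μ_{α,β}(B(θ, |θ−φ|)) ≍ |θ−φ|·(θ+φ)^{2α+1}·(2π−θ−φ)^{2β+1} uniformly in θ, φ ∈ (0, π), where B(θ,r) is the interval (θ−r, θ+r) intersected with (0,π). -/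
open Real MeasureTheory Set
open scoped ENNReal

/-!
Write `a = 2α + 1` and `b = 2β + 1`, both `> -1`. On `(0, π)` the density
`sin (s/2) ^ a * cos (s/2) ^ b` is comparable to `s ^ a * (π - s) ^ b`, and the truncated ball
`B(θ, |θ - φ|) ∩ (0, π)` is an interval `(u, v)` with `v - u ≍ |θ - φ|`, `v ≍ θ + φ` and
`π - u ≍ 2π - θ - φ`. It remains to show `∫_u^v s ^ a (π - s) ^ b ds ≍ (v - u) v ^ a (π - u) ^ b`.
On the left half of `(u, v)` the factor `(π - s) ^ b` is comparable to `(π - u) ^ b`, on the right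
half `s ^ a` is comparable to `v ^ a`, and `∫_u^v s ^ a ds = (v ^ p - u ^ p) / p` with `p = a + 1`
is comparable to `(v - u) v ^ a` by Bernoulli's inequality.

Comparability uniformly on a set `S` is expressed as `=Θ[𝓟 S]`, which is stable under products,
real powers and substitutions.
-/

open Asymptotics Filter

section Principal

variable {X : Type*} {s : Set X} {f g : X → ℝ}

theorem Asymptotics.isBigO_principal_of_le {C : ℝ} (hf : ∀ x ∈ s, 0 ≤ f x)
    (h : ∀ x ∈ s, f x ≤ C * g x) : f =O[𝓟 s] g :=
  isBigO_principal.2 ⟨|C|, fun x hx => by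
    rw [norm_of_nonneg (hf x hx), norm_eq_abs]
    exact (h x hx).trans ((le_abs_self _).trans (abs_mul C (g x)).le)⟩

theorem Asymptotics.IsBigO.exists_pos_le_mul_principal (h : f =O[𝓟 s] g)
    (hg : ∀ x ∈ s, 0 ≤ g x) : ∃ C > 0, ∀ x ∈ s, f x ≤ C * g x := by
  obtain ⟨C, hC, hfg⟩ := h.exists_pos
  refine ⟨C, hC, fun x hx => ?_⟩
  have := isBigOWith_principal.1 hfg x hx
  rw [norm_eq_abs, norm_of_nonneg (hg x hx)] at this
  exact (le_abs_self _).trans this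

theorem Asymptotics.IsTheta.exists_pos_bounds_principal (h : f =Θ[𝓟 s] g)
    (hf : ∀ x ∈ s, 0 ≤ f x) (hg : ∀ x ∈ s, 0 ≤ g x) :
    ∃ c C : ℝ, 0 < c ∧ 0 < C ∧ ∀ x ∈ s, c * g x ≤ f x ∧ f x ≤ C * g x := by
  obtain ⟨C, hC, hfg⟩ := h.1.exists_pos_le_mul_principal hg
  obtain ⟨K, hK, hgf⟩ := h.2.exists_pos_le_mul_principal hf
  refine ⟨K⁻¹, C, inv_pos.2 hK, hC, fun x hx => ⟨?_, hfg x hx⟩⟩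
  rw [inv_mul_le_iff₀ hK]
  exact hgf x hx

variable [MeasurableSpace X] {μ : Measure X}

theorem Asymptotics.IsBigO.setIntegral_principal (h : f =O[𝓟 s] g) (hf : ∀ x ∈ s, 0 ≤ f x)
    (hg : ∀ x ∈ s, 0 ≤ g x) (hfi : IntegrableOn f s μ) (hgi : IntegrableOn g s μ) :
    (fun t => ∫ x in t, f x ∂μ) =O[𝓟 {t | MeasurableSet t ∧ t ⊆ s}]
      fun t => ∫ x in t, g x ∂μ := by
  obtain ⟨C, -, hC⟩ := h.exists_pos_le_mul_principal hg
  refine isBigO_principal_of_le (C := C)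
    (fun t ht => setIntegral_nonneg ht.1 fun x hx => hf x (ht.2 hx)) fun t ht => ?_
  rw [← integral_const_mul]
  exact setIntegral_mono_on (hfi.mono_set ht.2) ((hgi.mono_set ht.2).const_mul C) ht.1
    fun x hx => hC x (ht.2 hx)

theorem Asymptotics.IsTheta.setIntegral_principal (h : f =Θ[𝓟 s] g)
    (hf : ∀ x ∈ s, 0 ≤ f x) (hg : ∀ x ∈ s, 0 ≤ g x) (hfi : IntegrableOn f s μ)
    (hgi : IntegrableOn g s μ) :
    (fun t => ∫ x in t, f x ∂μ) =Θ[𝓟 {t | MeasurableSet t ∧ t ⊆ s}]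
      fun t => ∫ x in t, g x ∂μ :=
  ⟨h.1.setIntegral_principal hf hg hfi hgi, h.2.setIntegral_principal hg hf hgi hfi⟩

end Principal

theorem Asymptotics.IsBigO.integrableOn_principal {X E F : Type*} [MeasurableSpace X]
    [NormedAddCommGroup E] [NormedAddCommGroup F] {μ : Measure X} {s : Set X} {f : X → E}
    {g : X → F} (h : f =O[𝓟 s] g) (hs : MeasurableSet s)
    (hfm : AEStronglyMeasurable f (μ.restrict s)) (hg : IntegrableOn g s μ) :
    IntegrableOn f s μ := by
  obtain ⟨C, hC⟩ := isBigO_principal.1 h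
  exact Integrable.mono' (hg.norm.const_mul C) hfm (ae_restrict_of_forall_mem hs hC)

theorem Asymptotics.IsTheta.comp_tendsto {X Y E F : Type*} [Norm E] [Norm F] {l : Filter X}
    {l' : Filter Y} {f : X → E} {g : X → F} {k : Y → X} (h : f =Θ[l] g)
    (hk : Tendsto k l' l) : (f ∘ k) =Θ[l'] (g ∘ k) :=
  ⟨h.1.comp_tendsto hk, h.2.comp_tendsto hk⟩

theorem one_sub_rpow_bounds {p t : ℝ} (hp : 0 ≤ p) (ht0 : 0 ≤ t) (ht1 : t ≤ 1) :
    min p 1 * (1 - t) ≤ 1 - t ^ p ∧ 1 - t ^ p ≤ max p 1 * (1 - t) := by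
  have hs : -1 ≤ t - 1 := by linarith
  rcases le_total p 1 with hp1 | hp1
  · have hbernoulli := rpow_one_add_le_one_add_mul_self hs hp hp1
    have hself := self_le_rpow_of_le_one ht0 ht1 hp1
    rw [add_sub_cancel] at hbernoulli
    rw [min_eq_left hp1, max_eq_right hp1]
    constructor <;> linarith
  · have hbernoulli := one_add_mul_self_le_rpow_one_add hs hp1
    have hself := rpow_le_self_of_le_one ht0 ht1 hp1
    rw [add_sub_cancel] at hbernoulli
    rw [min_eq_right hp1, max_eq_left hp1]
    constructor <;> linarith

theorem rpow_sub_rpow_bounds {p u v : ℝ} (hp : 0 < p) (hu : 0 ≤ u) (huv : u ≤ v) :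
    min p 1 * ((v - u) * v ^ (p - 1)) ≤ v ^ p - u ^ p ∧
      v ^ p - u ^ p ≤ max p 1 * ((v - u) * v ^ (p - 1)) := by
  rcases huv.eq_or_lt with rfl | huv
  · simp
  have hv : 0 < v := hu.trans_lt huv
  have hvp : 0 < v ^ p := rpow_pos_of_pos hv p
  have hdiff : v ^ p - u ^ p = v ^ p * (1 - (u / v) ^ p) := by
    rw [div_rpow hu hv.le]
    field_simp
  have hlin : (v - u) * v ^ (p - 1) = v ^ p * (1 - u / v) := by
    rw [rpow_sub_one hv.ne']
    field_simp
  obtain ⟨hlow, hup⟩ :=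
    one_sub_rpow_bounds hp.le (div_nonneg hu hv.le) ((div_le_one hv).2 huv.le)
  rw [hdiff, hlin, mul_left_comm, mul_left_comm (max p 1)]
  exact ⟨mul_le_mul_of_nonneg_left hlow hvp.le, mul_le_mul_of_nonneg_left hup hvp.le⟩

theorem integral_Ioo_rpow_s16 {a u v : ℝ} (ha : -1 < a) (huv : u ≤ v) :
    ∫ s in Ioo u v, s ^ a = (v ^ (a + 1) - u ^ (a + 1)) / (a + 1) := by
  rw [← integral_Ioc_eq_integral_Ioo, ← intervalIntegral.integral_of_le huv,
    integral_rpow (Or.inl ha)]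

theorem integral_Ioo_rpow_bounds {a u v : ℝ} (ha : -1 < a) (hu : 0 ≤ u) (huv : u ≤ v) :
    (v - u) * v ^ a ≤ (a + 1) / min (a + 1) 1 * ∫ s in Ioo u v, s ^ a ∧
      ∫ s in Ioo u v, s ^ a ≤ max (a + 1) 1 / (a + 1) * ((v - u) * v ^ a) := by
  have hp : 0 < a + 1 := by linarith
  have hmin : 0 < min (a + 1) 1 := lt_min hp one_pos
  obtain ⟨hlow, hup⟩ := rpow_sub_rpow_bounds hp hu huv
  rw [add_sub_cancel_right] at hlow hup
  rw [integral_Ioo_rpow_s16 ha huv]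
  constructor
  · have hcancel : (a + 1) / min (a + 1) 1 * ((v ^ (a + 1) - u ^ (a + 1)) / (a + 1)) =
        (v ^ (a + 1) - u ^ (a + 1)) / min (a + 1) 1 := by
      field_simp
    rw [hcancel, le_div_iff₀ hmin, mul_comm]
    exact hlow
  · rw [div_mul_eq_mul_div]
    exact div_le_div_of_nonneg_right hup hp.le

theorem integral_Ioo_sub_rpow_le {b L u v : ℝ} (hb : -1 < b) (huv : u ≤ v) (hv : v ≤ L) :
    ∫ s in Ioo u v, (L - s) ^ b ≤ max (b + 1) 1 / (b + 1) * ((v - u) * (L - u) ^ b) := by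
  have hreflect : ∫ s in Ioo u v, (L - s) ^ b = ∫ s in Ioo (L - v) (L - u), s ^ b := by
    rw [← integral_Ioc_eq_integral_Ioo, ← intervalIntegral.integral_of_le huv,
      intervalIntegral.integral_comp_sub_left (fun s => s ^ b) L,
      intervalIntegral.integral_of_le (by linarith), integral_Ioc_eq_integral_Ioo]
  have := (integral_Ioo_rpow_bounds hb (sub_nonneg.2 hv) (by linarith : L - v ≤ L - u)).2
  rw [hreflect]
  rwa [sub_sub_sub_cancel_left] at this

theorem rpow_le_rpow_abs_mul_rpow {x y K a : ℝ} (hx : 0 < x) (hy : 0 < y) (hxy : x ≤ K * y)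
    (hyx : y ≤ K * x) : x ^ a ≤ K ^ |a| * y ^ a := by
  have hK : 0 < K := pos_of_mul_pos_left (hx.trans_le hxy) hy.le
  rcases le_or_gt 0 a with ha | ha
  · rw [abs_of_nonneg ha, ← mul_rpow hK.le hy.le]
    exact rpow_le_rpow hx.le hxy ha
  · rw [abs_of_neg ha, rpow_neg hK.le, ← div_eq_inv_mul, ← div_rpow hy.le hK.le]
    exact rpow_le_rpow_of_nonpos (by positivity) ((div_le_iff₀' hK).2 hyx) ha.le

theorem rpow_mul_sub_rpow_nonneg {a b L s : ℝ} (hs : 0 ≤ s) (hsL : s ≤ L) :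
    0 ≤ s ^ a * (L - s) ^ b :=
  mul_nonneg (rpow_nonneg hs a) (rpow_nonneg (sub_nonneg.2 hsL) b)

theorem rpow_mul_sub_rpow_le {a b L u v s : ℝ} (hu : 0 ≤ u) (hv : v ≤ L)
    (hs : s ∈ Ioo u v) :
    s ^ a * (L - s) ^ b ≤ 2 ^ |b| * (L - u) ^ b * s ^ a + 2 ^ |a| * v ^ a * (L - s) ^ b := by
  obtain ⟨hus, hsv⟩ := hs
  have hs0 : 0 < s := hu.trans_lt hus
  have hLs : 0 < L - s := by linarith
  have hsa := rpow_nonneg hs0.le a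
  have hLsb := rpow_nonneg hLs.le b
  have hva := rpow_nonneg (hs0.trans hsv).le a
  have hLub := rpow_nonneg (by linarith : 0 ≤ L - u) b
  rcases le_total s ((u + v) / 2) with hm | hm
  · have hcmp : (L - s) ^ b ≤ 2 ^ |b| * (L - u) ^ b :=
      rpow_le_rpow_abs_mul_rpow hLs (by linarith) (by linarith) (by linarith)
    have : 0 ≤ 2 ^ |a| * v ^ a * (L - s) ^ b := by positivity
    nlinarith
  · have hcmp : s ^ a ≤ 2 ^ |a| * v ^ a :=
      rpow_le_rpow_abs_mul_rpow hs0 (by linarith) (by linarith) (by linarith)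
    have : 0 ≤ 2 ^ |b| * (L - u) ^ b * s ^ a := by positivity
    nlinarith

theorem integrableOn_Ioo_rpow {a : ℝ} (ha : -1 < a) (u v : ℝ) :
    IntegrableOn (fun s : ℝ => s ^ a) (Ioo u v) :=
  (intervalIntegral.intervalIntegrable_rpow' ha).1.mono_set Ioo_subset_Ioc_self

theorem integrableOn_Ioo_sub_rpow {b : ℝ} (hb : -1 < b) (L u v : ℝ) :
    IntegrableOn (fun s : ℝ => (L - s) ^ b) (Ioo u v) := by
  have := (intervalIntegral.intervalIntegrable_rpow' hb (a := L - u) (b := L - v)).comp_sub_left L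
  simp only [sub_sub_cancel] at this
  exact this.1.mono_set Ioo_subset_Ioc_self

theorem integrableOn_rpow_mul_sub_rpow {a b L u v : ℝ} (ha : -1 < a) (hb : -1 < b) (hu : 0 ≤ u)
    (hv : v ≤ L) : IntegrableOn (fun s : ℝ => s ^ a * (L - s) ^ b) (Ioo u v) := by
  refine Integrable.mono' (((integrableOn_Ioo_rpow ha u v).const_mul (2 ^ |b| * (L - u) ^ b)).add
      ((integrableOn_Ioo_sub_rpow hb L u v).const_mul (2 ^ |a| * v ^ a)))
    (by fun_prop : Measurable fun s : ℝ => s ^ a * (L - s) ^ b).aestronglyMeasurable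
    (ae_restrict_of_forall_mem measurableSet_Ioo fun s hs => ?_)
  rw [norm_of_nonneg (rpow_mul_sub_rpow_nonneg (hu.trans hs.1.le) (hs.2.le.trans hv))]
  exact rpow_mul_sub_rpow_le hu hv hs

theorem isBigO_integral_rpow_mul_sub_rpow {a b : ℝ} (ha : -1 < a) (hb : -1 < b) (L : ℝ) :
    (fun p : ℝ × ℝ => ∫ s in Ioo p.1 p.2, s ^ a * (L - s) ^ b)
      =O[𝓟 {p | 0 ≤ p.1 ∧ p.1 ≤ p.2 ∧ p.2 ≤ L}]
      fun p => (p.2 - p.1) * p.2 ^ a * (L - p.1) ^ b := by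
  refine isBigO_principal_of_le
    (C := 2 ^ |b| * (max (a + 1) 1 / (a + 1)) + 2 ^ |a| * (max (b + 1) 1 / (b + 1)))
    (fun p ⟨hu, _, hv⟩ => setIntegral_nonneg measurableSet_Ioo fun s hs =>
      rpow_mul_sub_rpow_nonneg (hu.trans hs.1.le) (hs.2.le.trans hv))
    fun ⟨u, v⟩ ⟨hu, huv, hv⟩ => ?_
  dsimp only at hu huv hv ⊢
  have hLu : 0 ≤ (L - u) ^ b := rpow_nonneg (by linarith) b
  have hva : 0 ≤ v ^ a := rpow_nonneg (hu.trans huv) a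
  have hAi := (integrableOn_Ioo_rpow ha u v).const_mul (2 ^ |b| * (L - u) ^ b)
  have hBi := (integrableOn_Ioo_sub_rpow hb L u v).const_mul (2 ^ |a| * v ^ a)
  calc ∫ s in Ioo u v, s ^ a * (L - s) ^ b
      ≤ ∫ s in Ioo u v, (2 ^ |b| * (L - u) ^ b * s ^ a + 2 ^ |a| * v ^ a * (L - s) ^ b) :=
        setIntegral_mono_on (integrableOn_rpow_mul_sub_rpow ha hb hu hv) (hAi.add hBi)
          measurableSet_Ioo fun s hs => rpow_mul_sub_rpow_le hu hv hs
    _ = 2 ^ |b| * (L - u) ^ b * (∫ s in Ioo u v, s ^ a) +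
          2 ^ |a| * v ^ a * ∫ s in Ioo u v, (L - s) ^ b := by
        rw [integral_add hAi hBi, integral_const_mul, integral_const_mul]
    _ ≤ 2 ^ |b| * (L - u) ^ b * (max (a + 1) 1 / (a + 1) * ((v - u) * v ^ a)) +
          2 ^ |a| * v ^ a * (max (b + 1) 1 / (b + 1) * ((v - u) * (L - u) ^ b)) := by
        gcongr
        · exact (integral_Ioo_rpow_bounds ha hu huv).2
        · exact integral_Ioo_sub_rpow_le hb huv hv
    _ = _ := by ring

theorem sub_rpow_mul_integral_rpow_le {a b L u m : ℝ} (ha : -1 < a) (hb : -1 < b) (hu : 0 ≤ u)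
    (hum : u ≤ m) (hmL : 2 * m ≤ L + u) :
    (L - u) ^ b * ∫ s in Ioo u m, s ^ a ≤ 2 ^ |b| * ∫ s in Ioo u m, s ^ a * (L - s) ^ b := by
  rw [← integral_const_mul, ← integral_const_mul]
  refine setIntegral_mono_on ((integrableOn_Ioo_rpow ha u m).const_mul _)
    ((integrableOn_rpow_mul_sub_rpow ha hb hu (by linarith)).const_mul _) measurableSet_Ioo
    fun s ⟨hus, hsm⟩ => ?_
  have hcmp : (L - u) ^ b ≤ 2 ^ |b| * (L - s) ^ b :=
    rpow_le_rpow_abs_mul_rpow (by linarith) (by linarith) (by linarith) (by linarith)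
  have := rpow_nonneg (hu.trans hus.le) a
  nlinarith

theorem isBigO_rev_integral_rpow_mul_sub_rpow {a b : ℝ} (ha : -1 < a) (hb : -1 < b) (L : ℝ) :
    (fun p : ℝ × ℝ => (p.2 - p.1) * p.2 ^ a * (L - p.1) ^ b)
      =O[𝓟 {p | 0 ≤ p.1 ∧ p.1 ≤ p.2 ∧ p.2 ≤ L}]
      fun p => ∫ s in Ioo p.1 p.2, s ^ a * (L - s) ^ b := by
  set C := (a + 1) / min (a + 1) 1
  refine isBigO_principal_of_le (C := 2 * 2 ^ |a| * C * 2 ^ |b|)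
    (fun p ⟨hu, huv, hv⟩ => mul_nonneg (mul_nonneg (sub_nonneg.2 huv)
      (rpow_nonneg (hu.trans huv) a)) (rpow_nonneg (by linarith) b))
    fun ⟨u, v⟩ ⟨hu, huv, hv⟩ => ?_
  dsimp only at hu huv hv ⊢
  rcases huv.eq_or_lt with rfl | huv
  · simp
  set m := (u + v) / 2 with hm
  have hum : u < m := by rw [hm]; linarith
  have hmv : m < v := by rw [hm]; linarith
  have hLu : 0 ≤ (L - u) ^ b := rpow_nonneg (by linarith) b
  have hC : 0 ≤ C := div_nonneg (by linarith) (le_min (by linarith) zero_le_one)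
  have hvm : v ^ a ≤ 2 ^ |a| * m ^ a :=
    rpow_le_rpow_abs_mul_rpow (hu.trans_lt huv) (hu.trans_lt hum) (by linarith) (by linarith)
  calc (v - u) * v ^ a * (L - u) ^ b
      = 2 * (L - u) ^ b * ((m - u) * v ^ a) := by ring
    _ ≤ 2 * (L - u) ^ b * ((m - u) * (2 ^ |a| * m ^ a)) := by gcongr
    _ = 2 * 2 ^ |a| * (L - u) ^ b * ((m - u) * m ^ a) := by ring
    _ ≤ 2 * 2 ^ |a| * (L - u) ^ b * (C * ∫ s in Ioo u m, s ^ a) :=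
        mul_le_mul_of_nonneg_left (integral_Ioo_rpow_bounds ha hu hum.le).1 (by positivity)
    _ = 2 * 2 ^ |a| * C * ((L - u) ^ b * ∫ s in Ioo u m, s ^ a) := by ring
    _ ≤ 2 * 2 ^ |a| * C * (2 ^ |b| * ∫ s in Ioo u m, s ^ a * (L - s) ^ b) :=
        mul_le_mul_of_nonneg_left
          (sub_rpow_mul_integral_rpow_le ha hb hu hum.le (by linarith)) (by positivity)
    _ ≤ 2 * 2 ^ |a| * C * (2 ^ |b| * ∫ s in Ioo u v, s ^ a * (L - s) ^ b) := by
        gcongr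
        · exact ae_restrict_of_forall_mem measurableSet_Ioo fun s hs =>
            rpow_mul_sub_rpow_nonneg (hu.trans hs.1.le) (hs.2.le.trans hv)
        · exact integrableOn_rpow_mul_sub_rpow ha hb hu hv
    _ = _ := by ring

theorem isTheta_integral_rpow_mul_sub_rpow {a b : ℝ} (ha : -1 < a) (hb : -1 < b) (L : ℝ) :
    (fun p : ℝ × ℝ => ∫ s in Ioo p.1 p.2, s ^ a * (L - s) ^ b)
      =Θ[𝓟 {p | 0 ≤ p.1 ∧ p.1 ≤ p.2 ∧ p.2 ≤ L}]
      fun p => (p.2 - p.1) * p.2 ^ a * (L - p.1) ^ b :=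
  ⟨isBigO_integral_rpow_mul_sub_rpow ha hb L, isBigO_rev_integral_rpow_mul_sub_rpow ha hb L⟩

theorem sin_half_bounds {s : ℝ} (h0 : 0 ≤ s) (hπ : s ≤ π) :
    s / π ≤ sin (s / 2) ∧ sin (s / 2) ≤ s / 2 := by
  refine ⟨?_, sin_le (by linarith)⟩
  calc s / π = 2 / π * (s / 2) := by field_simp
    _ ≤ sin (s / 2) := mul_le_sin (by linarith) (by linarith)

theorem isTheta_sin_half : (fun s => sin (s / 2)) =Θ[𝓟 (Icc 0 π)] fun s => s := by
  refine ⟨isBigO_principal_of_le (C := 1 / 2) ?_ ?_, isBigO_principal_of_le (C := π) ?_ ?_⟩ <;>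
    intro s ⟨h0, hπ⟩ <;> have := sin_half_bounds h0 hπ
  · linarith [div_nonneg h0 pi_pos.le]
  · linarith
  · exact h0
  · exact (div_le_iff₀' pi_pos).1 this.1

theorem isTheta_cos_half : (fun s => cos (s / 2)) =Θ[𝓟 (Icc 0 π)] fun s => π - s := by
  have hreflect : (fun s => cos (s / 2)) = (fun s => sin (s / 2)) ∘ fun s => π - s := by
    ext s
    rw [Function.comp_apply, ← sin_pi_div_two_sub]
    ring_nf
  rw [hreflect]
  exact isTheta_sin_half.comp_tendsto
    (tendsto_principal_principal.2 fun s ⟨h0, hπ⟩ => ⟨by linarith, by linarith⟩)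

theorem sin_half_nonneg {s : ℝ} (hs : s ∈ Icc 0 π) : 0 ≤ sin (s / 2) :=
  sin_nonneg_of_nonneg_of_le_pi (by linarith [hs.1]) (by linarith [hs.2, pi_pos])

theorem cos_half_nonneg {s : ℝ} (hs : s ∈ Icc 0 π) : 0 ≤ cos (s / 2) :=
  cos_nonneg_of_mem_Icc ⟨by linarith [hs.1, pi_pos], by linarith [hs.2]⟩

theorem isTheta_sin_half_rpow_mul_cos_half_rpow (a b : ℝ) :
    (fun s => sin (s / 2) ^ a * cos (s / 2) ^ b)
      =Θ[𝓟 (Icc 0 π)] fun s => s ^ a * (π - s) ^ b :=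
  (isTheta_sin_half.rpow (eventually_principal.2 fun _ => sin_half_nonneg)
      (eventually_principal.2 fun _ hs => hs.1)).mul
    (isTheta_cos_half.rpow (eventually_principal.2 fun _ => cos_half_nonneg)
      (eventually_principal.2 fun _ hs => sub_nonneg.2 hs.2))

theorem integrableOn_sin_half_rpow_mul_cos_half_rpow {a b : ℝ} (ha : -1 < a) (hb : -1 < b) :
    IntegrableOn (fun s => sin (s / 2) ^ a * cos (s / 2) ^ b) (Ioo 0 π) :=
  ((isTheta_sin_half_rpow_mul_cos_half_rpow a b).1.mono
      (principal_mono.2 Ioo_subset_Icc_self)).integrableOn_principal measurableSet_Ioo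
    (by fun_prop : Measurable fun s => sin (s / 2) ^ a * cos (s / 2) ^ b).aestronglyMeasurable
    (integrableOn_rpow_mul_sub_rpow ha hb le_rfl le_rfl)

theorem toReal_jacobiMeasure_apply {α β : ℝ} (hα : -1 < α) (hβ : -1 < β) {t : Set ℝ}
    (ht : MeasurableSet t) :
    (jacobiMeasure α β t).toReal =
      ∫ s in t ∩ Ioo 0 π, sin (s / 2) ^ (2 * α + 1) * cos (s / 2) ^ (2 * β + 1) := by
  have hint := (integrableOn_sin_half_rpow_mul_cos_half_rpow (a := 2 * α + 1) (b := 2 * β + 1)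
    (by linarith) (by linarith)).mono_set (inter_subset_right (s := t))
  have hnonneg :
      ∀ s ∈ t ∩ Ioo 0 π, 0 ≤ sin (s / 2) ^ (2 * α + 1) * cos (s / 2) ^ (2 * β + 1) :=
    fun s hs => mul_nonneg (rpow_nonneg (sin_half_nonneg (Ioo_subset_Icc_self hs.2)) _)
      (rpow_nonneg (cos_half_nonneg (Ioo_subset_Icc_self hs.2)) _)
  have hmeas : MeasurableSet (t ∩ Ioo 0 π) := ht.inter measurableSet_Ioo
  rw [jacobiMeasure, withDensity_apply _ ht, Measure.restrict_restrict ht,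
    ← ofReal_integral_eq_lintegral_ofReal hint (ae_restrict_of_forall_mem hmeas hnonneg),
    ENNReal.toReal_ofReal (setIntegral_nonneg hmeas hnonneg)]

/-! The ball `B(θ, |θ - φ|)` truncated to `(0, L)` is the interval
`(max (θ - |θ - φ|) 0, min (θ + |θ - φ|) L)`. -/

section Ball

variable (L : ℝ)

theorem ball_endpoints_le {θ : ℝ} (φ : ℝ) (hθ : θ ∈ Ioo 0 L) :
    0 ≤ max (θ - |θ - φ|) 0 ∧ max (θ - |θ - φ|) 0 ≤ min (θ + |θ - φ|) L ∧
      min (θ + |θ - φ|) L ≤ L := by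
  have := abs_nonneg (θ - φ)
  exact ⟨le_max_right _ _, max_le (le_min (by linarith) (by linarith [hθ.2]))
    (le_min (by linarith [hθ.1]) (by linarith [hθ.1, hθ.2])), min_le_right _ _⟩

theorem isTheta_ball_length :
    (fun p : ℝ × ℝ => min (p.1 + |p.1 - p.2|) L - max (p.1 - |p.1 - p.2|) 0)
      =Θ[𝓟 (Ioo 0 L ×ˢ Ioo 0 L)] fun p => |p.1 - p.2| := by
  refine ⟨isBigO_principal_of_le (C := 2) ?_ ?_, isBigO_principal_of_le (C := 1) ?_ ?_⟩ <;>
    rintro ⟨θ, φ⟩ ⟨⟨hθ0, hθL⟩, hφ0, hφL⟩ <;> dsimp only <;>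
    rcases min_cases (θ + |θ - φ|) L with h1 | h1 <;>
    rcases max_cases (θ - |θ - φ|) 0 with h2 | h2 <;>
    rcases abs_cases (θ - φ) with h3 | h3 <;>
    linarith [h1.1, h1.2, h2.1, h2.2, h3.1, h3.2]

theorem isTheta_ball_right :
    (fun p : ℝ × ℝ => min (p.1 + |p.1 - p.2|) L)
      =Θ[𝓟 (Ioo 0 L ×ˢ Ioo 0 L)] fun p => p.1 + p.2 := by
  refine ⟨isBigO_principal_of_le (C := 2) ?_ ?_, isBigO_principal_of_le (C := 2) ?_ ?_⟩ <;>
    rintro ⟨θ, φ⟩ ⟨⟨hθ0, hθL⟩, hφ0, hφL⟩ <;> dsimp only <;>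
    rcases min_cases (θ + |θ - φ|) L with h1 | h1 <;>
    rcases abs_cases (θ - φ) with h3 | h3 <;>
    linarith [h1.1, h1.2, h3.1, h3.2]

theorem isTheta_ball_left :
    (fun p : ℝ × ℝ => L - max (p.1 - |p.1 - p.2|) 0)
      =Θ[𝓟 (Ioo 0 L ×ˢ Ioo 0 L)] fun p => 2 * L - p.1 - p.2 := by
  refine ⟨isBigO_principal_of_le (C := 2) ?_ ?_, isBigO_principal_of_le (C := 2) ?_ ?_⟩ <;>
    rintro ⟨θ, φ⟩ ⟨⟨hθ0, hθL⟩, hφ0, hφL⟩ <;> dsimp only <;>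
    rcases max_cases (θ - |θ - φ|) 0 with h2 | h2 <;>
    rcases abs_cases (θ - φ) with h3 | h3 <;>
    linarith [h2.1, h2.2, h3.1, h3.2]

theorem isTheta_ball_weight (a b : ℝ) :
    (fun p : ℝ × ℝ => (min (p.1 + |p.1 - p.2|) L - max (p.1 - |p.1 - p.2|) 0) *
        min (p.1 + |p.1 - p.2|) L ^ a * (L - max (p.1 - |p.1 - p.2|) 0) ^ b)
      =Θ[𝓟 (Ioo 0 L ×ˢ Ioo 0 L)]
      fun p => |p.1 - p.2| * (p.1 + p.2) ^ a * (2 * L - p.1 - p.2) ^ b := by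
  refine ((isTheta_ball_length L).mul ((isTheta_ball_right L).rpow ?_ ?_)).mul
    ((isTheta_ball_left L).rpow ?_ ?_) <;>
    refine eventually_principal.2 fun p ⟨hθ, hφ⟩ => ?_
  · have := ball_endpoints_le L p.2 hθ
    exact this.1.trans this.2.1
  · exact add_nonneg hθ.1.le hφ.1.le
  · have := ball_endpoints_le L p.2 hθ
    exact sub_nonneg.2 (this.2.1.trans this.2.2)
  · show 0 ≤ 2 * L - p.1 - p.2
    linarith [hθ.2, hφ.2]

end Ball

theorem isTheta_jacobiMeasure_ball {α β : ℝ} (hα : -1 < α) (hβ : -1 < β) :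
    (fun p : ℝ × ℝ =>
        (jacobiMeasure α β (Ioo (p.1 - |p.1 - p.2|) (p.1 + |p.1 - p.2|))).toReal)
      =Θ[𝓟 (Ioo 0 π ×ˢ Ioo 0 π)]
      fun p => |p.1 - p.2| * (p.1 + p.2) ^ (2 * α + 1) * (2 * π - p.1 - p.2) ^ (2 * β + 1) := by
  have ha : -1 < 2 * α + 1 := by linarith
  have hb : -1 < 2 * β + 1 := by linarith
  set u := fun p : ℝ × ℝ => max (p.1 - |p.1 - p.2|) 0
  set v := fun p : ℝ × ℝ => min (p.1 + |p.1 - p.2|) π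
  have hball : ∀ p ∈ Ioo 0 π ×ˢ Ioo 0 π, 0 ≤ u p ∧ u p ≤ v p ∧ v p ≤ π :=
    fun p hp => ball_endpoints_le π p.2 hp.1
  have hdensity := (isTheta_sin_half_rpow_mul_cos_half_rpow (2 * α + 1) (2 * β + 1)).mono
    (principal_mono.2 Ioo_subset_Icc_self)
  have hintegrals := hdensity.setIntegral_principal
    (fun s hs => mul_nonneg (rpow_nonneg (sin_half_nonneg (Ioo_subset_Icc_self hs)) _)
      (rpow_nonneg (cos_half_nonneg (Ioo_subset_Icc_self hs)) _))
    (fun s hs => rpow_mul_sub_rpow_nonneg hs.1.le hs.2.le)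
    (integrableOn_sin_half_rpow_mul_cos_half_rpow ha hb)
    (integrableOn_rpow_mul_sub_rpow ha hb le_rfl le_rfl)
  calc _ =ᶠ[𝓟 (Ioo 0 π ×ˢ Ioo 0 π)] fun p => ∫ s in Ioo (u p) (v p),
          sin (s / 2) ^ (2 * α + 1) * cos (s / 2) ^ (2 * β + 1) :=
        eventually_principal.2 fun p _ => by
          rw [toReal_jacobiMeasure_apply hα hβ measurableSet_Ioo, Ioo_inter_Ioo]
    _ =Θ[𝓟 (Ioo 0 π ×ˢ Ioo 0 π)] fun p => ∫ s in Ioo (u p) (v p),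
          s ^ (2 * α + 1) * (π - s) ^ (2 * β + 1) :=
        hintegrals.comp_tendsto (tendsto_principal_principal.2 fun p hp =>
          ⟨measurableSet_Ioo, Ioo_subset_Ioo (hball p hp).1 (hball p hp).2.2⟩)
    _ =Θ[𝓟 (Ioo 0 π ×ˢ Ioo 0 π)] fun p => (v p - u p) * v p ^ (2 * α + 1) *
          (π - u p) ^ (2 * β + 1) :=
        (isTheta_integral_rpow_mul_sub_rpow ha hb π).comp_tendsto (k := fun p => (u p, v p))
          (tendsto_principal_principal.2 hball)
    _ =Θ[𝓟 (Ioo 0 π ×ˢ Ioo 0 π)] _ := isTheta_ball_weight π _ _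

theorem stmt16 (α β : ℝ) (hα : -1 < α) (hβ : -1 < β) :
    ∃ c C : ℝ, 0 < c ∧ 0 < C ∧ ∀ θ ∈ Set.Ioo (0 : ℝ) π, ∀ φ ∈ Set.Ioo (0 : ℝ) π,
      c * (|θ - φ| * (θ + φ) ^ (2 * α + 1) * (2 * π - θ - φ) ^ (2 * β + 1))
          ≤ ((jacobiMeasure α β) (Set.Ioo (θ - |θ - φ|) (θ + |θ - φ|))).toReal ∧
      ((jacobiMeasure α β) (Set.Ioo (θ - |θ - φ|) (θ + |θ - φ|))).toReal
          ≤ C * (|θ - φ| * (θ + φ) ^ (2 * α + 1) * (2 * π - θ - φ) ^ (2 * β + 1)) := by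
  obtain ⟨c, C, hc, hC, hbounds⟩ := (isTheta_jacobiMeasure_ball hα hβ).exists_pos_bounds_principal
    (fun _ _ => ENNReal.toReal_nonneg) fun p ⟨⟨hθ0, hθπ⟩, hφ0, hφπ⟩ =>
      mul_nonneg (mul_nonneg (abs_nonneg _) (rpow_nonneg (by linarith) _))
        (rpow_nonneg (by linarith) _)
  exact ⟨c, C, hc, hC, fun θ hθ φ hφ => hbounds (θ, φ) ⟨hθ, hφ⟩⟩
end
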